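/- arXiv:math/0611841 — 4 statements merged into one kernel-verified Lean document; each statement's English description precedes it below -/
import Mathlib

section
/- Let G be a toroidal grid diagram of size n representing a knot K. Then the Maslov grading of the canonical generator x^LL is given by M(x^LL) = −writhe(K) − #{upward cusps of G} + 1. -/
open Finset

noncomputable section

open scoped Classical

/-- A formal rational-coefficient combination of points in the plane. -/
abbrev PtComb := (ℝ × ℝ) →₀ ℚ

/-- `I(A,B)`: the number of pairs `(a, b) ∈ A × B` with `a₁ < b₁` and `a₂ < b₂`,
extended bilinearly to formal combinations of finite point sets. -/
def Ifun (f g : PtComb) : ℚ :=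
  ∑ p ∈ f.support, ∑ q ∈ g.support,
    if p.1 < q.1 ∧ p.2 < q.2 then f p * g q else 0

/-- `J(A,B) = (I(A,B) + I(B,A))/2`. -/
def Jfun (f g : PtComb) : ℚ := (Ifun f g + Ifun g f) / 2

/-- A toroidal grid diagram of size `n`: a pair of permutations `σX`, `σO` of
`{0, …, n-1}` with `σX i ≠ σO i` for all `i`. -/
structure Grid (n : ℕ) where
  σX : Equiv.Perm (Fin n)
  σO : Equiv.Perm (Fin n)
  disj : ∀ i, σX i ≠ σO i

namespace Grid

variable {n : ℕ}

/-- `G` represents a knot: the permutation `σO⁻¹ ∘ σX` has a single orbit,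
i.e. it is an `n`-cycle. -/
def RepKnot (G : Grid n) : Prop :=
  ∀ i j : Fin n, ∃ k : ℕ, ((G.σO⁻¹ * G.σX) ^ k) i = j

/-- The `X`-marking of column `i`, at the planar point `(i + 1/2, σX i + 1/2)`. -/
def Xpt (G : Grid n) (i : Fin n) : ℝ × ℝ :=
  (((i : ℕ) : ℝ) + 1/2, ((G.σX i : ℕ) : ℝ) + 1/2)

/-- The `O`-marking of column `i`, at the planar point `(i + 1/2, σO i + 1/2)`. -/
def Opt (G : Grid n) (i : Fin n) : ℝ × ℝ :=
  (((i : ℕ) : ℝ) + 1/2, ((G.σO i : ℕ) : ℝ) + 1/2)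

/-- The set `𝕏` of `X`-markings, as a formal point combination. -/
def XX (G : Grid n) : PtComb := ∑ i : Fin n, Finsupp.single (G.Xpt i) 1

/-- The set `𝕆` of `O`-markings, as a formal point combination. -/
def OO (G : Grid n) : PtComb := ∑ i : Fin n, Finsupp.single (G.Opt i) 1

/-- The point set `{(i, x i)}` of a generator `x`, as a formal point combination. -/
def pts (x : Equiv.Perm (Fin n)) : PtComb :=
  ∑ i : Fin n, Finsupp.single (((i : ℕ) : ℝ), ((x i : ℕ) : ℝ)) 1

/-- The Maslov grading `M(x) = J(x − 𝕆, x − 𝕆) + 1`. -/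
def M (G : Grid n) (x : Equiv.Perm (Fin n)) : ℚ :=
  Jfun (pts x - G.OO) (pts x - G.OO) + 1

/-- The `X`-Maslov grading `M_𝕏(x) = J(x − 𝕏, x − 𝕏) + 1`. -/
def MX (G : Grid n) (x : Equiv.Perm (Fin n)) : ℚ :=
  Jfun (pts x - G.XX) (pts x - G.XX) + 1

/-- The Alexander grading `A(x) = J(x − (𝕏+𝕆)/2, 𝕏 − 𝕆) − (n−1)/2`. -/
def A (G : Grid n) (x : Equiv.Perm (Fin n)) : ℚ :=
  Jfun (pts x - (2 : ℚ)⁻¹ • (G.XX + G.OO)) (G.XX - G.OO) - ((n : ℚ) - 1) / 2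

/-- The canonical generator `x^LL`, whose points are the lower-left corners of the
`X`-marked squares. -/
def xLL (G : Grid n) : Equiv.Perm (Fin n) := G.σX

/-- The canonical generator `x^UR`, `x^UR(i) = σX((i−1) mod n) + 1 (mod n)`, whose points
are the upper-right corners of the `X`-marked squares (reduced mod `n`). -/
def xUR [NeZero n] (G : Grid n) : Equiv.Perm (Fin n) where
  toFun i := G.σX (i - 1) + 1
  invFun i := G.σX.symm (i - 1) + 1
  left_inv i := by simp
  right_inv i := by simp

end Grid

namespace Grid

variable {n : ℕ}

/-- The vertical segment of column `i` (from `X_i` to `O_i`) and the horizontal segment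
of row `j` (from the `O` of row `j` to the `X` of row `j`) cross transversally in the
interiors of both segments. -/
def Crossing (G : Grid n) (i j : Fin n) : Prop :=
  min (G.σX i) (G.σO i) < j ∧ j < max (G.σX i) (G.σO i) ∧
  min (G.σX.symm j) (G.σO.symm j) < i ∧ i < max (G.σX.symm j) (G.σO.symm j)

/-- The sign of the crossing of the vertical segment of column `i` with the horizontal
segment of row `j`: it is `+1` iff `det(v, h) > 0`, where `v` points from `X_i` to `O_i`
and `h` points from the `O`-marking of row `j` to its `X`-marking. -/
def crossSign (G : Grid n) (i j : Fin n) : ℤ :=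
  if ((G.σX i < G.σO i) ↔ (G.σO.symm j < G.σX.symm j)) then -1 else 1

/-- The writhe of the planar diagram `D(G)`: the sum of the signs of all crossings. -/
def writhe (G : Grid n) : ℤ :=
  ∑ p : Fin n × Fin n, if G.Crossing p.1 p.2 then G.crossSign p.1 p.2 else 0

/-- `X_i` is a NE corner: the `O`-marking of its row lies strictly to its left, and
`σO i < σX i`. -/
def XNE (G : Grid n) (i : Fin n) : Prop :=
  G.σO.symm (G.σX i) < i ∧ G.σO i < G.σX i

/-- `X_i` is a SW corner: the `O`-marking of its row lies strictly to its right, and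
`σO i > σX i`. -/
def XSW (G : Grid n) (i : Fin n) : Prop :=
  i < G.σO.symm (G.σX i) ∧ G.σX i < G.σO i

/-- `O_i` is a NE corner: the `X`-marking of its row lies strictly to its left, and
`σX i < σO i`. -/
def ONE (G : Grid n) (i : Fin n) : Prop :=
  G.σX.symm (G.σO i) < i ∧ G.σX i < G.σO i

/-- `O_i` is a SW corner: the `X`-marking of its row lies strictly to its right, and
`σX i > σO i`. -/
def OSW (G : Grid n) (i : Fin n) : Prop :=
  i < G.σX.symm (G.σO i) ∧ G.σO i < G.σX i

/-- The number of downward-oriented cusps: `X`-markings that are NE corners together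
with `O`-markings that are SW corners. -/
def downCusps (G : Grid n) : ℕ :=
  (univ.filter fun i => G.XNE i).card + (univ.filter fun i => G.OSW i).card

/-- The number of upward-oriented cusps: `O`-markings that are NE corners together
with `X`-markings that are SW corners. -/
def upCusps (G : Grid n) : ℕ :=
  (univ.filter fun i => G.ONE i).card + (univ.filter fun i => G.XSW i).card

/-- The total number of cusps (markings that are NE or SW corners). -/
def cusps (G : Grid n) : ℕ := G.downCusps + G.upCusps

/-- The Thurston–Bennequin invariant of the Legendrian knot associated to `G`:
`tb = −writhe − (1/2)·#cusps`. -/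
def tb (G : Grid n) : ℚ := -(G.writhe : ℚ) - (G.cusps : ℚ) / 2

/-- The rotation number of the oriented Legendrian knot associated to `G`:
`r = (1/2)·(#downward cusps − #upward cusps)`. -/
def rot (G : Grid n) : ℚ := ((G.downCusps : ℚ) - (G.upCusps : ℚ)) / 2

end Grid


section Aux

open Grid

lemma nat_lt_half (i j : ℕ) : (i:ℝ) < (j:ℝ) + 1/2 ↔ i ≤ j := by
  constructor
  · intro h; by_contra h'; push_neg at h'
    have : (j:ℝ) + 1 ≤ i := by exact_mod_cast h'
    linarith
  · intro h
    have : (i:ℝ) ≤ j := by exact_mod_cast h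
    linarith

lemma half_lt_nat (i j : ℕ) : (i:ℝ) + 1/2 < j ↔ i < j := by
  constructor
  · intro h; by_contra h'; push_neg at h'
    have : (j:ℝ) ≤ i := by exact_mod_cast h'
    linarith
  · intro h
    have : (i:ℝ) + 1 ≤ j := by exact_mod_cast h
    linarith

lemma half_lt_half (i j : ℕ) : (i:ℝ) + 1/2 < (j:ℝ) + 1/2 ↔ i < j := by
  constructor
  · intro h; exact_mod_cast (by linarith : (i:ℝ) < j)
  · intro h
    have : (i:ℝ) < j := by exact_mod_cast h
    linarith

lemma nat_ne_half (i j : ℕ) : (i:ℝ) ≠ (j:ℝ) + 1/2 := by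
  intro h
  have h2 : ((2*i : ℕ) : ℝ) = ((2*j+1 : ℕ) : ℝ) := by push_cast; linarith
  have := Nat.cast_injective (R := ℝ) h2
  omega

lemma Ifun_eq_sum (f g : PtComb) (S T : Finset (ℝ × ℝ))
    (hS : ∀ p ∉ S, f p = 0) (hT : ∀ q ∉ T, g q = 0) :
    Ifun f g = ∑ p ∈ S, ∑ q ∈ T, if p.1 < q.1 ∧ p.2 < q.2 then f p * g q else 0 := by
  unfold Ifun
  have hS' : f.support ⊆ S := fun p hp => by
    by_contra h; exact Finsupp.mem_support_iff.mp hp (hS p h)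
  have hT' : g.support ⊆ T := fun q hq => by
    by_contra h; exact Finsupp.mem_support_iff.mp hq (hT q h)
  rw [Finset.sum_subset hS' (fun p _ hp => Finset.sum_eq_zero fun q _ => by
    simp [Finsupp.notMem_support_iff.mp hp])]
  exact Finset.sum_congr rfl fun p _ =>
    Finset.sum_subset hT' (fun q _ hq => by simp [Finsupp.notMem_support_iff.mp hq])

lemma key (iv r A B p q : ℕ) (hpq : p ≠ q) (hiq : iv = q ↔ A = r) (hip : iv = p ↔ B = r) :
    (((if iv < q ∧ A < r then (1:ℚ) else 0) + (if iv ≤ p ∧ A ≤ r then (-1:ℚ) else 0))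
    + ((if iv < q ∧ B < r then (-1:ℚ) else 0) + (if iv < p ∧ B < r then (1:ℚ) else 0)))
    + (if ((A < r ∨ B < r) ∧ (r < A ∨ r < B) ∧ (q < iv ∨ p < iv) ∧ (iv < q ∨ iv < p))
        then (if ((A < B) ↔ (p < q)) then (-1:ℚ) else 1) else 0)
    + ((if iv = p ∧ (q < p ∧ A < r) then (1:ℚ) else 0)
     + (if iv = q ∧ (q < p ∧ r < B) then (1:ℚ) else 0)) = 0 := by
  split_ifs <;> first | omega | norm_num

end Aux

/-- For a toroidal grid diagram `G` of size `n` representing a knot `K`,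
the Maslov grading of the canonical generator `x^LL` is
`M(x^LL) = −writhe(K) − #{upward cusps of G} + 1`. -/
theorem maslov_xLL {n : ℕ} [NeZero n] (hn : 2 ≤ n) (G : Grid n) (hK : G.RepKnot) :
    G.M G.xLL = -(G.writhe : ℚ) - (G.upCusps : ℚ) + 1 := by
  classical
  set xp : Fin n → ℝ × ℝ := fun i => ((((i : ℕ) : ℝ)), (((G.σX i : Fin n) : ℕ) : ℝ)) with hxp
  set f : PtComb := Grid.pts G.xLL - G.OO with hf
  have fval : ∀ Pt : ℝ × ℝ, f Pt =
      (∑ i : Fin n, if xp i = Pt then (1:ℚ) else 0)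
      - ∑ i : Fin n, if G.Opt i = Pt then (1:ℚ) else 0 := by
    intro Pt
    rw [hf, Finsupp.sub_apply]
    unfold Grid.pts Grid.OO Grid.xLL
    rw [Finsupp.finset_sum_apply, Finsupp.finset_sum_apply]
    simp [Finsupp.single_apply, hxp]
  have xpinj : ∀ i j : Fin n, xp i = xp j → i = j := by
    intro i j h
    have h1 : ((i:ℕ):ℝ) = ((j:ℕ):ℝ) := congrArg Prod.fst h
    exact Fin.val_injective (Nat.cast_injective h1)
  have opinj : ∀ i j : Fin n, G.Opt i = G.Opt j → i = j := by
    intro i j h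
    have h1 : ((i:ℕ):ℝ) + 1/2 = ((j:ℕ):ℝ) + 1/2 := congrArg Prod.fst h
    have h2 : ((i:ℕ):ℝ) = ((j:ℕ):ℝ) := by linarith
    exact Fin.val_injective (Nat.cast_injective h2)
  have xpop : ∀ i j : Fin n, xp i ≠ G.Opt j := by
    intro i j h
    exact nat_ne_half i j (congrArg Prod.fst h)
  have fxp : ∀ j : Fin n, f (xp j) = 1 := by
    intro j
    rw [fval]
    rw [Finset.sum_eq_single j (fun i _ hij => if_neg fun h => hij (xpinj i j h)) (by simp),
        Finset.sum_eq_zero fun i _ => if_neg fun h => xpop j i h.symm]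
    simp
  have fop : ∀ j : Fin n, f (G.Opt j) = -1 := by
    intro j
    rw [fval]
    rw [Finset.sum_eq_zero fun i _ => if_neg fun h => xpop i j h,
        Finset.sum_eq_single j (fun i _ hij => if_neg fun h => hij (opinj i j h)) (by simp)]
    simp
  have fsupp : ∀ Pt : ℝ × ℝ,
      Pt ∉ (Finset.univ.image xp ∪ Finset.univ.image G.Opt) → f Pt = 0 := by
    intro Pt hPt
    have h1 : ∀ i : Fin n, xp i ≠ Pt := fun i h =>
      hPt (Finset.mem_union_left _ (h ▸ Finset.mem_image_of_mem xp (Finset.mem_univ i)))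
    have h2 : ∀ i : Fin n, G.Opt i ≠ Pt := fun i h =>
      hPt (Finset.mem_union_right _ (h ▸ Finset.mem_image_of_mem G.Opt (Finset.mem_univ i)))
    rw [fval, Finset.sum_eq_zero fun i _ => if_neg (h1 i),
        Finset.sum_eq_zero fun i _ => if_neg (h2 i), sub_zero]
  have hdisj : Disjoint (Finset.univ.image xp) (Finset.univ.image G.Opt) := by
    rw [Finset.disjoint_left]
    intro Pt hx ho
    obtain ⟨i, _, hi⟩ := Finset.mem_image.mp hx
    obtain ⟨j, _, hj⟩ := Finset.mem_image.mp ho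
    exact xpop i j (hi.trans hj.symm)
  have himgsum : ∀ F : (ℝ × ℝ) → ℚ,
      (∑ p ∈ Finset.univ.image xp ∪ Finset.univ.image G.Opt, F p)
      = ∑ i : Fin n, F (xp i) + ∑ i : Fin n, F (G.Opt i) := by
    intro F
    rw [Finset.sum_union hdisj,
        Finset.sum_image (fun i _ j _ h => xpinj i j h),
        Finset.sum_image (fun i _ j _ h => opinj i j h)]
  have hJ : G.M G.xLL = Ifun f f + 1 := by
    rw [Grid.M, ← hf, Jfun]; ring
  have hM : G.M G.xLL =
      (∑ i : Fin n, ∑ j : Fin n,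
        (if ((i:Fin n):ℕ) < ((j:Fin n):ℕ) ∧ ((G.σX i : Fin n):ℕ) < ((G.σX j : Fin n):ℕ) then (1:ℚ) else 0))
    + (∑ i : Fin n, ∑ j : Fin n,
        (if ((i:Fin n):ℕ) ≤ ((j:Fin n):ℕ) ∧ ((G.σX i : Fin n):ℕ) ≤ ((G.σO j : Fin n):ℕ) then (-1:ℚ) else 0))
    + (∑ i : Fin n, ∑ j : Fin n,
        (if ((i:Fin n):ℕ) < ((j:Fin n):ℕ) ∧ ((G.σO i : Fin n):ℕ) < ((G.σX j : Fin n):ℕ) then (-1:ℚ) else 0))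
    + (∑ i : Fin n, ∑ j : Fin n,
        (if ((i:Fin n):ℕ) < ((j:Fin n):ℕ) ∧ ((G.σO i : Fin n):ℕ) < ((G.σO j : Fin n):ℕ) then (1:ℚ) else 0))
    + 1 := by
    rw [hJ, Ifun_eq_sum f f _ _ fsupp fsupp, himgsum]
    simp only [himgsum]
    simp only [fxp, fop]
    simp only [hxp, Grid.Opt, Nat.cast_lt, nat_lt_half, half_lt_nat, half_lt_half,
      one_mul, mul_one, neg_mul, neg_neg]
    rw [Finset.sum_add_distrib, Finset.sum_add_distrib]
    ring
  have r1 : (∑ i : Fin n, ∑ j : Fin n,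
        (if ((i:Fin n):ℕ) < ((j:Fin n):ℕ) ∧ ((G.σX i : Fin n):ℕ) < ((G.σX j : Fin n):ℕ) then (1:ℚ) else 0))
      = ∑ i : Fin n, ∑ r : Fin n,
        (if ((i:Fin n):ℕ) < ((G.σX.symm r : Fin n):ℕ) ∧ ((G.σX i : Fin n):ℕ) < ((r:Fin n):ℕ) then (1:ℚ) else 0) :=
    Finset.sum_congr rfl fun i _ =>
      (Equiv.sum_comp G.σX.symm (fun j : Fin n =>
        if ((i:Fin n):ℕ) < ((j:Fin n):ℕ) ∧ ((G.σX i : Fin n):ℕ) < ((G.σX j : Fin n):ℕ) then (1:ℚ) else 0)).symm.trans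
      (Finset.sum_congr rfl fun r _ => by simp)
  have r2 : (∑ i : Fin n, ∑ j : Fin n,
        (if ((i:Fin n):ℕ) ≤ ((j:Fin n):ℕ) ∧ ((G.σX i : Fin n):ℕ) ≤ ((G.σO j : Fin n):ℕ) then (-1:ℚ) else 0))
      = ∑ i : Fin n, ∑ r : Fin n,
        (if ((i:Fin n):ℕ) ≤ ((G.σO.symm r : Fin n):ℕ) ∧ ((G.σX i : Fin n):ℕ) ≤ ((r:Fin n):ℕ) then (-1:ℚ) else 0) :=
    Finset.sum_congr rfl fun i _ =>
      (Equiv.sum_comp G.σO.symm (fun j : Fin n =>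
        if ((i:Fin n):ℕ) ≤ ((j:Fin n):ℕ) ∧ ((G.σX i : Fin n):ℕ) ≤ ((G.σO j : Fin n):ℕ) then (-1:ℚ) else 0)).symm.trans
      (Finset.sum_congr rfl fun r _ => by simp)
  have r3 : (∑ i : Fin n, ∑ j : Fin n,
        (if ((i:Fin n):ℕ) < ((j:Fin n):ℕ) ∧ ((G.σO i : Fin n):ℕ) < ((G.σX j : Fin n):ℕ) then (-1:ℚ) else 0))
      = ∑ i : Fin n, ∑ r : Fin n,
        (if ((i:Fin n):ℕ) < ((G.σX.symm r : Fin n):ℕ) ∧ ((G.σO i : Fin n):ℕ) < ((r:Fin n):ℕ) then (-1:ℚ) else 0) :=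
    Finset.sum_congr rfl fun i _ =>
      (Equiv.sum_comp G.σX.symm (fun j : Fin n =>
        if ((i:Fin n):ℕ) < ((j:Fin n):ℕ) ∧ ((G.σO i : Fin n):ℕ) < ((G.σX j : Fin n):ℕ) then (-1:ℚ) else 0)).symm.trans
      (Finset.sum_congr rfl fun r _ => by simp)
  have r4 : (∑ i : Fin n, ∑ j : Fin n,
        (if ((i:Fin n):ℕ) < ((j:Fin n):ℕ) ∧ ((G.σO i : Fin n):ℕ) < ((G.σO j : Fin n):ℕ) then (1:ℚ) else 0))
      = ∑ i : Fin n, ∑ r : Fin n,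
        (if ((i:Fin n):ℕ) < ((G.σO.symm r : Fin n):ℕ) ∧ ((G.σO i : Fin n):ℕ) < ((r:Fin n):ℕ) then (1:ℚ) else 0) :=
    Finset.sum_congr rfl fun i _ =>
      (Equiv.sum_comp G.σO.symm (fun j : Fin n =>
        if ((i:Fin n):ℕ) < ((j:Fin n):ℕ) ∧ ((G.σO i : Fin n):ℕ) < ((G.σO j : Fin n):ℕ) then (1:ℚ) else 0)).symm.trans
      (Finset.sum_congr rfl fun r _ => by simp)
  have hw : (G.writhe : ℚ) = ∑ i : Fin n, ∑ r : Fin n,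
      (if G.Crossing i r then
        (if ((G.σX i < G.σO i) ↔ (G.σO.symm r < G.σX.symm r)) then (-1:ℚ) else 1) else 0) := by
    rw [Grid.writhe, Int.cast_sum, Fintype.sum_prod_type]
    refine Finset.sum_congr rfl fun i _ => Finset.sum_congr rfl fun r _ => ?_
    rw [Grid.crossSign]
    split_ifs <;> norm_num
  have inner1 : ∀ i : Fin n, (∑ r : Fin n,
      if i = G.σO.symm r ∧ (G.σX.symm r < G.σO.symm r ∧ G.σX i < r) then (1:ℚ) else 0)
      = if G.ONE i then 1 else 0 := by
    intro i
    rw [Finset.sum_eq_single (G.σO i)]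
    · simp [Grid.ONE]
      congr
    · intro r _ hr
      rw [if_neg]
      rintro ⟨h1, -⟩
      exact hr (by rw [h1, Equiv.apply_symm_apply])
    · simp
  have inner2 : ∀ i : Fin n, (∑ r : Fin n,
      if i = G.σX.symm r ∧ (G.σX.symm r < G.σO.symm r ∧ r < G.σO i) then (1:ℚ) else 0)
      = if G.XSW i then 1 else 0 := by
    intro i
    rw [Finset.sum_eq_single (G.σX i)]
    · simp [Grid.XSW]
      congr
    · intro r _ hr
      rw [if_neg]
      rintro ⟨h1, -⟩
      exact hr (by rw [h1, Equiv.apply_symm_apply])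
    · simp
  have hu : (G.upCusps : ℚ) = ∑ i : Fin n, ∑ r : Fin n,
      ((if i = G.σO.symm r ∧ (G.σX.symm r < G.σO.symm r ∧ G.σX i < r) then (1:ℚ) else 0)
     + (if i = G.σX.symm r ∧ (G.σX.symm r < G.σO.symm r ∧ r < G.σO i) then (1:ℚ) else 0)) := by
    have step1 : (G.upCusps : ℚ)
        = ∑ i : Fin n, ((if G.ONE i then (1:ℚ) else 0) + (if G.XSW i then 1 else 0)) := by
      simp only [Grid.upCusps, Finset.card_filter, Nat.cast_add, Nat.cast_sum,
        apply_ite (Nat.cast : ℕ → ℚ), Nat.cast_one, Nat.cast_zero, ← Finset.sum_add_distrib]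
    rw [step1]
    exact (Finset.sum_congr rfl fun i _ => by
      rw [Finset.sum_add_distrib, inner1 i, inner2 i]).symm
  have hzero : ∀ i r : Fin n,
      (((if ((i:Fin n):ℕ) < ((G.σX.symm r : Fin n):ℕ) ∧ ((G.σX i : Fin n):ℕ) < ((r:Fin n):ℕ) then (1:ℚ) else 0)
       + (if ((i:Fin n):ℕ) ≤ ((G.σO.symm r : Fin n):ℕ) ∧ ((G.σX i : Fin n):ℕ) ≤ ((r:Fin n):ℕ) then (-1:ℚ) else 0))
      + ((if ((i:Fin n):ℕ) < ((G.σX.symm r : Fin n):ℕ) ∧ ((G.σO i : Fin n):ℕ) < ((r:Fin n):ℕ) then (-1:ℚ) else 0)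
       + (if ((i:Fin n):ℕ) < ((G.σO.symm r : Fin n):ℕ) ∧ ((G.σO i : Fin n):ℕ) < ((r:Fin n):ℕ) then (1:ℚ) else 0)))
      + (if G.Crossing i r then
          (if ((G.σX i < G.σO i) ↔ (G.σO.symm r < G.σX.symm r)) then (-1:ℚ) else 1) else 0)
      + ((if i = G.σO.symm r ∧ (G.σX.symm r < G.σO.symm r ∧ G.σX i < r) then (1:ℚ) else 0)
       + (if i = G.σX.symm r ∧ (G.σX.symm r < G.σO.symm r ∧ r < G.σO i) then (1:ℚ) else 0)) = 0 := by
    intro i r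
    have hpq : ((G.σO.symm r : Fin n):ℕ) ≠ ((G.σX.symm r : Fin n):ℕ) := by
      intro h
      have h2 : G.σO.symm r = G.σX.symm r := Fin.val_injective h
      have h3 : G.σX (G.σO.symm r) = r := by rw [h2]; exact G.σX.apply_symm_apply r
      exact G.disj (G.σO.symm r) (h3.trans (G.σO.apply_symm_apply r).symm)
    have hiq : ((i:Fin n):ℕ) = ((G.σX.symm r : Fin n):ℕ) ↔ ((G.σX i : Fin n):ℕ) = ((r:Fin n):ℕ) := by
      constructor
      · intro h
        have h2 : i = G.σX.symm r := Fin.val_injective h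
        rw [h2, G.σX.apply_symm_apply]
      · intro h
        have h2 : G.σX i = r := Fin.val_injective h
        rw [← h2, G.σX.symm_apply_apply]
    have hip : ((i:Fin n):ℕ) = ((G.σO.symm r : Fin n):ℕ) ↔ ((G.σO i : Fin n):ℕ) = ((r:Fin n):ℕ) := by
      constructor
      · intro h
        have h2 : i = G.σO.symm r := Fin.val_injective h
        rw [h2, G.σO.apply_symm_apply]
      · intro h
        have h2 : G.σO i = r := Fin.val_injective h
        rw [← h2, G.σO.symm_apply_apply]
    simp only [Grid.Crossing, min_lt_iff, lt_max_iff, Fin.lt_def, Fin.le_def, Fin.ext_iff]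
    exact key i.val r.val (G.σX i).val (G.σO i).val (G.σO.symm r).val (G.σX.symm r).val hpq hiq hip
  have h0 : ∑ i : Fin n, ∑ r : Fin n,
      ((((if ((i:Fin n):ℕ) < ((G.σX.symm r : Fin n):ℕ) ∧ ((G.σX i : Fin n):ℕ) < ((r:Fin n):ℕ) then (1:ℚ) else 0)
       + (if ((i:Fin n):ℕ) ≤ ((G.σO.symm r : Fin n):ℕ) ∧ ((G.σX i : Fin n):ℕ) ≤ ((r:Fin n):ℕ) then (-1:ℚ) else 0))
      + ((if ((i:Fin n):ℕ) < ((G.σX.symm r : Fin n):ℕ) ∧ ((G.σO i : Fin n):ℕ) < ((r:Fin n):ℕ) then (-1:ℚ) else 0)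
       + (if ((i:Fin n):ℕ) < ((G.σO.symm r : Fin n):ℕ) ∧ ((G.σO i : Fin n):ℕ) < ((r:Fin n):ℕ) then (1:ℚ) else 0)))
      + (if G.Crossing i r then
          (if ((G.σX i < G.σO i) ↔ (G.σO.symm r < G.σX.symm r)) then (-1:ℚ) else 1) else 0)
      + ((if i = G.σO.symm r ∧ (G.σX.symm r < G.σO.symm r ∧ G.σX i < r) then (1:ℚ) else 0)
       + (if i = G.σX.symm r ∧ (G.σX.symm r < G.σO.symm r ∧ r < G.σO i) then (1:ℚ) else 0))) = 0 :=
    Finset.sum_eq_zero fun i _ => Finset.sum_eq_zero fun r _ => hzero i r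
  simp only [Finset.sum_add_distrib] at h0 hu
  rw [hM, r1, r2, r3, r4]
  linarith [h0, hw, hu]
end
end

section
/- Let G be a toroidal grid diagram of size n and let G′ be obtained from G by a cyclic permutation of its rows or of its columns (i.e., σ′_X = s∘σ_X and σ′_O = s∘σ_O, or σ′_X = σ_X∘s and σ′_O = σ_O∘s, where s(j) = (j+1) mod n). Then G can be transformed into G′ by a finite sequence of planar commutation moves and of stabilization and destabilization moves of types X:NW, X:SE, O:NW and O:SE. -/
open Finset

noncomputable section

open scoped Classical

namespace Grid

variable {n : ℕ}

/-- `c` lies in the cyclic interval (arc) of `ℤ/n` from `a` to `b` (excluding `b`). -/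
def inArc (a b c : Fin n) : Prop :=
  ((c - a : Fin n) : ℕ) < ((b - a : Fin n) : ℕ)

/-- Toroidal commutation of the adjacent columns `i` and `i+1 (mod n)`: the markings of
the two columns have disjoint value sets, the markings of column `i+1` lie in the same
one of the two cyclic intervals into which the markings of column `i` divide `ℤ/n`, and
the decorations of the two columns are exchanged. -/
def TorColComm [NeZero n] (G G' : Grid n) : Prop :=
  ∃ i : Fin n,
    G.σX (i + 1) ≠ G.σX i ∧ G.σX (i + 1) ≠ G.σO i ∧
    G.σO (i + 1) ≠ G.σX i ∧ G.σO (i + 1) ≠ G.σO i ∧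
    (inArc (G.σX i) (G.σO i) (G.σX (i + 1)) ↔ inArc (G.σX i) (G.σO i) (G.σO (i + 1))) ∧
    G'.σX = G.σX * Equiv.swap i (i + 1) ∧ G'.σO = G.σO * Equiv.swap i (i + 1)

/-- Toroidal commutation of the adjacent rows `j` and `j+1 (mod n)`; defined
symmetrically to column commutation. -/
def TorRowComm [NeZero n] (G G' : Grid n) : Prop :=
  ∃ j : Fin n,
    G.σX.symm (j + 1) ≠ G.σX.symm j ∧ G.σX.symm (j + 1) ≠ G.σO.symm j ∧
    G.σO.symm (j + 1) ≠ G.σX.symm j ∧ G.σO.symm (j + 1) ≠ G.σO.symm j ∧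
    (inArc (G.σX.symm j) (G.σO.symm j) (G.σX.symm (j + 1)) ↔
      inArc (G.σX.symm j) (G.σO.symm j) (G.σO.symm (j + 1))) ∧
    G'.σX = Equiv.swap j (j + 1) * G.σX ∧ G'.σO = Equiv.swap j (j + 1) * G.σO

/-- A toroidal commutation move (of columns or of rows). -/
def TorComm [NeZero n] (G G' : Grid n) : Prop :=
  TorColComm G G' ∨ TorRowComm G G'

/-- Planar commutation of consecutive columns `i` and `i+1` (no wraparound): the value
sets are disjoint and the closed intervals they span are disjoint or nested; the
decorations of the two columns are exchanged. -/
def PlanarColComm (G G' : Grid n) : Prop :=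
  ∃ i i' : Fin n, (i' : ℕ) = (i : ℕ) + 1 ∧
    G.σX i' ≠ G.σX i ∧ G.σX i' ≠ G.σO i ∧ G.σO i' ≠ G.σX i ∧ G.σO i' ≠ G.σO i ∧
    (max (G.σX i) (G.σO i) < min (G.σX i') (G.σO i') ∨
     max (G.σX i') (G.σO i') < min (G.σX i) (G.σO i) ∨
     (min (G.σX i) (G.σO i) < min (G.σX i') (G.σO i') ∧
       max (G.σX i') (G.σO i') < max (G.σX i) (G.σO i)) ∨
     (min (G.σX i') (G.σO i') < min (G.σX i) (G.σO i) ∧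
       max (G.σX i) (G.σO i) < max (G.σX i') (G.σO i'))) ∧
    G'.σX = G.σX * Equiv.swap i i' ∧ G'.σO = G.σO * Equiv.swap i i'

/-- Planar commutation of consecutive rows `j` and `j+1` (no wraparound); defined
symmetrically to column commutation. -/
def PlanarRowComm (G G' : Grid n) : Prop :=
  ∃ j j' : Fin n, (j' : ℕ) = (j : ℕ) + 1 ∧
    G.σX.symm j' ≠ G.σX.symm j ∧ G.σX.symm j' ≠ G.σO.symm j ∧
    G.σO.symm j' ≠ G.σX.symm j ∧ G.σO.symm j' ≠ G.σO.symm j ∧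
    (max (G.σX.symm j) (G.σO.symm j) < min (G.σX.symm j') (G.σO.symm j') ∨
     max (G.σX.symm j') (G.σO.symm j') < min (G.σX.symm j) (G.σO.symm j) ∨
     (min (G.σX.symm j) (G.σO.symm j) < min (G.σX.symm j') (G.σO.symm j') ∧
       max (G.σX.symm j') (G.σO.symm j') < max (G.σX.symm j) (G.σO.symm j)) ∨
     (min (G.σX.symm j') (G.σO.symm j') < min (G.σX.symm j) (G.σO.symm j) ∧
       max (G.σX.symm j) (G.σO.symm j) < max (G.σX.symm j') (G.σO.symm j'))) ∧
    G'.σX = Equiv.swap j j' * G.σX ∧ G'.σO = Equiv.swap j j' * G.σO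

/-- A planar commutation move (of columns or of rows). -/
def PlanarComm (G G' : Grid n) : Prop :=
  PlanarColComm G G' ∨ PlanarRowComm G G'

/-- `G'` is obtained from `G` by an `X`-type stabilization at column `i`, where the new
grid lines are inserted so that `colT` is the new vertical position and `rowT` the new
horizontal position: all `O`-markings and all `X`-markings of columns `k ≠ i` keep their
positions (suitably reindexed), while the stabilized `X` of column `i` is replaced by
the 2×2 block containing two `X`'s and one `O` as dictated by the type. -/
def IsStabXAt (G : Grid n) (G' : Grid (n + 1)) (i : Fin n) (colT rowT : Fin (n + 1)) :
    Prop :=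
  (∀ k : Fin n, G'.σO (colT.succAbove k) = rowT.succAbove (G.σO k)) ∧
  (∀ k : Fin n, k ≠ i → G'.σX (colT.succAbove k) = rowT.succAbove (G.σX k)) ∧
  G'.σX (colT.succAbove i) = rowT ∧
  G'.σX colT = rowT.succAbove (G.σX i) ∧
  G'.σO colT = rowT

/-- Stabilization of type `X:NW` (the unmarked square of the new 2×2 block is at its
north-west). -/
def IsStabXNW (G : Grid n) (G' : Grid (n + 1)) : Prop :=
  ∃ i : Fin n, IsStabXAt G G' i i.succ (G.σX i).castSucc

/-- Stabilization of type `X:SE`. -/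
def IsStabXSE (G : Grid n) (G' : Grid (n + 1)) : Prop :=
  ∃ i : Fin n, IsStabXAt G G' i i.castSucc (G.σX i).succ

/-- Stabilization of type `X:SW`. -/
def IsStabXSW (G : Grid n) (G' : Grid (n + 1)) : Prop :=
  ∃ i : Fin n, IsStabXAt G G' i i.succ (G.σX i).succ

/-- Stabilization of type `X:NE`. -/
def IsStabXNE (G : Grid n) (G' : Grid (n + 1)) : Prop :=
  ∃ i : Fin n, IsStabXAt G G' i i.castSucc (G.σX i).castSucc

/-- `G'` is obtained from `G` by an `O`-type stabilization at column `i`; the same as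
`IsStabXAt` with the roles of `X` and `O` exchanged. -/
def IsStabOAt (G : Grid n) (G' : Grid (n + 1)) (i : Fin n) (colT rowT : Fin (n + 1)) :
    Prop :=
  (∀ k : Fin n, G'.σX (colT.succAbove k) = rowT.succAbove (G.σX k)) ∧
  (∀ k : Fin n, k ≠ i → G'.σO (colT.succAbove k) = rowT.succAbove (G.σO k)) ∧
  G'.σO (colT.succAbove i) = rowT ∧
  G'.σO colT = rowT.succAbove (G.σO i) ∧
  G'.σX colT = rowT

/-- Stabilization of type `O:NW`. -/
def IsStabONW (G : Grid n) (G' : Grid (n + 1)) : Prop :=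
  ∃ i : Fin n, IsStabOAt G G' i i.succ (G.σO i).castSucc

/-- Stabilization of type `O:SE`. -/
def IsStabOSE (G : Grid n) (G' : Grid (n + 1)) : Prop :=
  ∃ i : Fin n, IsStabOAt G G' i i.castSucc (G.σO i).succ

/-- Stabilization of type `O:SW`. -/
def IsStabOSW (G : Grid n) (G' : Grid (n + 1)) : Prop :=
  ∃ i : Fin n, IsStabOAt G G' i i.succ (G.σO i).succ

/-- Stabilization of type `O:NE`. -/
def IsStabONE (G : Grid n) (G' : Grid (n + 1)) : Prop :=
  ∃ i : Fin n, IsStabOAt G G' i i.castSucc (G.σO i).castSucc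

end Grid

/-- A grid diagram of unspecified size. -/
def GridS : Type := Σ n : ℕ, Grid n

open Grid in
/-- An elementary move allowed in Statement 11: a planar commutation move, or a
stabilization or destabilization of type `X:NW`, `X:SE`, `O:NW` or `O:SE`. -/
def Move (p q : GridS) : Prop :=
  (∃ (n : ℕ) (G G' : Grid n), p = ⟨n, G⟩ ∧ q = ⟨n, G'⟩ ∧ PlanarComm G G') ∨
  (∃ (n : ℕ) (G : Grid n) (G' : Grid (n + 1)),
    (IsStabXNW G G' ∨ IsStabXSE G G' ∨ IsStabONW G G' ∨ IsStabOSE G G') ∧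
    ((p = ⟨n, G⟩ ∧ q = ⟨n + 1, G'⟩) ∨ (p = ⟨n + 1, G'⟩ ∧ q = ⟨n, G⟩)))

namespace Stmt11
open Equiv Grid

variable {n : ℕ}

/-- The permutation of `Fin (n+1)` sending `p ↦ q` and `p.succAbove k ↦ q.succAbove (σ k)`. -/
def ext (p : Fin (n + 1)) (σ : Equiv.Perm (Fin n)) (q : Fin (n + 1)) :
    Equiv.Perm (Fin (n + 1)) :=
  (finSuccEquiv' p).trans ((Equiv.optionCongr σ).trans (finSuccEquiv' q).symm)

@[simp] lemma ext_pivot (p : Fin (n + 1)) (σ : Perm (Fin n)) (q : Fin (n + 1)) :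
    ext p σ q p = q := by
  simp [ext, finSuccEquiv'_at]

@[simp] lemma ext_succAbove (p : Fin (n + 1)) (σ : Perm (Fin n)) (q : Fin (n + 1))
    (k : Fin n) : ext p σ q (p.succAbove k) = q.succAbove (σ k) := by
  simp [ext, finSuccEquiv'_succAbove]

lemma ext_one_self (p : Fin (n + 1)) : ext p (1 : Perm (Fin n)) p = 1 := by
  refine Equiv.ext fun j => ?_
  rcases eq_or_ne j p with rfl | hj
  · simp
  · obtain ⟨k, rfl⟩ := Fin.exists_succAbove_eq hj
    simp

lemma succAbove_castSucc_eq_succ {u k : Fin n} (h : k ≠ u) :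
    u.castSucc.succAbove k = u.succ.succAbove k := by
  rcases lt_or_gt_of_ne h with h | h
  · rw [Fin.succAbove_castSucc_of_lt _ _ h, Fin.succAbove_succ_of_le _ _ h.le]
  · rw [Fin.succAbove_castSucc_of_le _ _ h.le, Fin.succAbove_succ_of_lt _ _ h]

/-- Commutation step for moving the distinguished pivot column right. -/
lemma ext_succ (u : Fin n) (σ : Perm (Fin n)) (q : Fin (n + 1)) :
    ext u.succ σ q = ext u.castSucc σ q * Equiv.swap u.castSucc u.succ := by
  refine Equiv.ext fun j => ?_
  rw [Perm.mul_apply]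
  rcases eq_or_ne j u.castSucc with rfl | hj1
  · rw [Equiv.swap_apply_left]
    conv_lhs => rw [show u.castSucc = u.succ.succAbove u from (Fin.succAbove_succ_self u).symm]
    conv_rhs => rw [show u.succ = u.castSucc.succAbove u from (Fin.succAbove_castSucc_self u).symm]
    rw [ext_succAbove, ext_succAbove]
  rcases eq_or_ne j u.succ with rfl | hj2
  · rw [Equiv.swap_apply_right, ext_pivot, ext_pivot]
  · obtain ⟨k, rfl⟩ := Fin.exists_succAbove_eq hj1
    have hk : k ≠ u := by
      rintro rfl; exact hj2 (Fin.succAbove_castSucc_self _)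
    rw [Equiv.swap_apply_of_ne_of_ne hj1 hj2, succAbove_castSucc_eq_succ hk, ext_succAbove,
      ← succAbove_castSucc_eq_succ hk, ext_succAbove]

/-- Commutation step for moving the distinguished pivot row up. -/
lemma ext_one_succ (p : Fin (n + 1)) (u : Fin n) :
    ext p (1 : Perm (Fin n)) u.succ
      = Equiv.swap u.castSucc u.succ * ext p (1 : Perm (Fin n)) u.castSucc := by
  refine Equiv.ext fun j => ?_
  rw [Perm.mul_apply]
  rcases eq_or_ne j p with rfl | hj
  · rw [ext_pivot, ext_pivot, Equiv.swap_apply_left]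
  · obtain ⟨k, rfl⟩ := Fin.exists_succAbove_eq hj
    rcases eq_or_ne k u with rfl | hk
    · rw [ext_succAbove, ext_succAbove, Perm.one_apply, Fin.succAbove_succ_self,
        Fin.succAbove_castSucc_self, Equiv.swap_apply_right]
    · have h1 : u.castSucc.succAbove k ≠ u.castSucc := Fin.succAbove_ne _ _
      have h2 : u.castSucc.succAbove k ≠ u.succ := by
        rw [← Fin.succAbove_castSucc_self u]
        exact fun h => hk (Fin.succAbove_right_inj.mp h)
      rw [ext_succAbove, ext_succAbove, Perm.one_apply,
        Equiv.swap_apply_of_ne_of_ne h1 h2, succAbove_castSucc_eq_succ hk]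

lemma swap_swap_comm {α : Type*} [DecidableEq α] {a b c : α} (hab : a ≠ b) (hbc : b ≠ c)
    (hac : a ≠ c) : Equiv.swap a c * Equiv.swap a b = Equiv.swap a b * Equiv.swap b c := by
  refine Equiv.ext fun x => ?_
  rw [Perm.mul_apply, Perm.mul_apply]
  rcases eq_or_ne x a with rfl | hxa
  · rw [Equiv.swap_apply_left, Equiv.swap_apply_of_ne_of_ne hab.symm hbc,
      Equiv.swap_apply_of_ne_of_ne hab hac, Equiv.swap_apply_left]
  rcases eq_or_ne x b with rfl | hxb
  · rw [Equiv.swap_apply_right, Equiv.swap_apply_left, Equiv.swap_apply_left,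
      Equiv.swap_apply_of_ne_of_ne hac.symm hbc.symm]
  rcases eq_or_ne x c with rfl | hxc
  · rw [Equiv.swap_apply_of_ne_of_ne hac.symm hbc.symm, Equiv.swap_apply_right,
      Equiv.swap_apply_right, Equiv.swap_apply_right]
  · rw [Equiv.swap_apply_of_ne_of_ne hxa hxb, Equiv.swap_apply_of_ne_of_ne hxa hxc,
      Equiv.swap_apply_of_ne_of_ne hxb hxc, Equiv.swap_apply_of_ne_of_ne hxa hxb]

lemma val_max (a b : Fin n) : ((max a b : Fin n) : ℕ) = max (a : ℕ) (b : ℕ) := by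
  rcases le_total a b with h | h
  · rw [max_eq_right h, max_eq_right (by exact h)]
  · rw [max_eq_left h, max_eq_left (by exact h)]

lemma val_min (a b : Fin n) : ((min a b : Fin n) : ℕ) = min (a : ℕ) (b : ℕ) := by
  rcases le_total a b with h | h
  · rw [min_eq_left h, min_eq_left (by exact h)]
  · rw [min_eq_right h, min_eq_right (by exact h)]

end Stmt11
namespace Stmt11
open Equiv Grid

variable {m : ℕ}

lemma move_colComm {G G' : Grid m} (h : PlanarColComm G G') :
    Move ⟨m, G⟩ ⟨m, G'⟩ := Or.inl ⟨m, G, G', rfl, rfl, Or.inl h⟩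

lemma move_rowComm {G G' : Grid m} (h : PlanarRowComm G G') :
    Move ⟨m, G⟩ ⟨m, G'⟩ := Or.inl ⟨m, G, G', rfl, rfl, Or.inr h⟩

lemma move_stabONW {G : Grid m} {G' : Grid (m + 1)} (h : IsStabONW G G') :
    Move ⟨m, G⟩ ⟨m + 1, G'⟩ :=
  Or.inr ⟨m, G, G', Or.inr (Or.inr (Or.inl h)), Or.inl ⟨rfl, rfl⟩⟩

lemma move_destabXSE {G : Grid m} {G' : Grid (m + 1)} (h : IsStabXSE G G') :
    Move ⟨m + 1, G'⟩ ⟨m, G⟩ :=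
  Or.inr ⟨m, G, G', Or.inr (Or.inl h), Or.inr ⟨rfl, rfl⟩⟩

/-- Interval disjunction when the first pair occupies two adjacent values. -/
lemma short_pair_cases {a b c d : Fin m} (hb : (b : ℕ) = (a : ℕ) + 1)
    (h1 : c ≠ a) (h2 : c ≠ b) (h3 : d ≠ a) (h4 : d ≠ b) :
    max a b < min c d ∨ max c d < min a b ∨
      (min a b < min c d ∧ max c d < max a b) ∨
      (min c d < min a b ∧ max a b < max c d) := by
  have n1 : (c : ℕ) ≠ a := fun h => h1 (Fin.ext h)
  have n2 : (c : ℕ) ≠ b := fun h => h2 (Fin.ext h)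
  have n3 : (d : ℕ) ≠ a := fun h => h3 (Fin.ext h)
  have n4 : (d : ℕ) ≠ b := fun h => h4 (Fin.ext h)
  simp only [Fin.lt_def, val_max, val_min]
  omega

/-- Interval disjunction when the first pair occupies the extreme values. -/
lemma long_pair_cases {a b c d : Fin m} (ha : (a : ℕ) = 0) (hb : (b : ℕ) + 1 = m)
    (h1 : c ≠ a) (h2 : c ≠ b) (h3 : d ≠ a) (h4 : d ≠ b) :
    max a b < min c d ∨ max c d < min a b ∨
      (min a b < min c d ∧ max c d < max a b) ∨
      (min c d < min a b ∧ max a b < max c d) := by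
  have n1 : (c : ℕ) ≠ a := fun h => h1 (Fin.ext h)
  have n2 : (c : ℕ) ≠ b := fun h => h2 (Fin.ext h)
  have n3 : (d : ℕ) ≠ a := fun h => h3 (Fin.ext h)
  have n4 : (d : ℕ) ≠ b := fun h => h4 (Fin.ext h)
  have hc := c.isLt
  have hd := d.isLt
  refine Or.inr (Or.inr (Or.inl ?_))
  constructor <;> simp only [Fin.lt_def, val_max, val_min] <;> omega

end Stmt11
namespace Stmt11
open Equiv Grid

variable {n : ℕ}

/-! ### The intermediate diagrams of the column-shift scheme -/

def AX (G : Grid n) (r : Fin n) (c : Fin (n + 1)) : Perm (Fin (n + 1)) :=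
  ext c G.σX r.castSucc

def AO (G : Grid n) (r o : Fin n) (c : Fin (n + 1)) : Perm (Fin (n + 1)) :=
  ext c G.σO r.castSucc * Equiv.swap c o.castSucc

def BX (G : Grid n) (r : Fin n) (t : Fin (n + 1)) : Perm (Fin (n + 1)) :=
  ext r.succ 1 t * AX G r (Fin.last n)

def BO (G : Grid n) (r o : Fin n) (t : Fin (n + 1)) : Perm (Fin (n + 1)) :=
  ext r.succ 1 t * AO G r o (Fin.last n)

def CX (G : Grid n) (r w : Fin n) (p : Fin (n + 1)) : Perm (Fin (n + 1)) :=
  BX G r w.castSucc * ext p 1 0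

def CO (G : Grid n) (r w o : Fin n) (p : Fin (n + 1)) : Perm (Fin (n + 1)) :=
  BO G r o w.castSucc * ext p 1 0

lemma hat_to_t {r : Fin n} {t : Fin (n + 1)} {m : Fin n} (hm : m ≠ r) :
    ext r.succ (1 : Perm (Fin n)) t (r.castSucc.succAbove m) = t.succAbove m := by
  rw [succAbove_castSucc_eq_succ hm, ext_succAbove, Perm.one_apply]

lemma hat_to_t_r {r : Fin n} {t : Fin (n + 1)} :
    ext r.succ (1 : Perm (Fin n)) t (r.castSucc.succAbove r) = t := by
  rw [Fin.succAbove_castSucc_self, ext_pivot]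

lemma F_at_castSucc_r {r : Fin n} {t : Fin (n + 1)} :
    ext r.succ (1 : Perm (Fin n)) t r.castSucc = t.succAbove r := by
  conv_lhs => rw [show r.castSucc = r.succ.succAbove r from (Fin.succAbove_succ_self r).symm]
  rw [ext_succAbove, Perm.one_apply]

lemma zero_eq_last_succAbove [NeZero n] : (0 : Fin (n + 1)) = (Fin.last n).succAbove 0 := by
  rw [Fin.succAbove_last]
  exact Fin.ext (by simp)

lemma castSucc_eq_last_succAbove (k : Fin n) : k.castSucc = (Fin.last n).succAbove k := by
  rw [Fin.succAbove_last]

section evals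

variable (G : Grid n) (r w o x : Fin n) (c t p : Fin (n + 1)) (k : Fin n)

lemma AX_pivot : AX G r c c = r.castSucc := ext_pivot _ _ _

lemma AX_succAbove : AX G r c (c.succAbove k) = r.castSucc.succAbove (G.σX k) :=
  ext_succAbove _ _ _ _

lemma AO_pivot (hoc : o.castSucc < c) :
    AO G r o c c = r.castSucc.succAbove (G.σO o) := by
  rw [AO, Perm.mul_apply, Equiv.swap_apply_left,
    ← Fin.succAbove_of_castSucc_lt _ _ hoc, ext_succAbove]

lemma AO_oCast (hoc : o.castSucc < c) : AO G r o c o.castSucc = r.castSucc := by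
  rw [AO, Perm.mul_apply, Equiv.swap_apply_right, ext_pivot]

lemma AO_succAbove (hoc : o.castSucc < c) (hk : k ≠ o) :
    AO G r o c (c.succAbove k) = r.castSucc.succAbove (G.σO k) := by
  have h1 : c.succAbove k ≠ c := Fin.succAbove_ne _ _
  have h2 : c.succAbove k ≠ o.castSucc := by
    rw [← Fin.succAbove_of_castSucc_lt _ _ hoc]
    exact fun h => hk (Fin.succAbove_right_inj.mp h)
  rw [AO, Perm.mul_apply, Equiv.swap_apply_of_ne_of_ne h1 h2, ext_succAbove]

lemma BX_zero [NeZero n] (hr : G.σX 0 = r) : BX G r t 0 = t := by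
  rw [BX, Perm.mul_apply, zero_eq_last_succAbove, AX_succAbove, hr, hat_to_t_r]

lemma BX_castSucc (hk : G.σX k ≠ r) : BX G r t k.castSucc = t.succAbove (G.σX k) := by
  rw [BX, Perm.mul_apply, castSucc_eq_last_succAbove, AX_succAbove, hat_to_t hk]

lemma BX_last : BX G r t (Fin.last n) = t.succAbove r := by
  rw [BX, Perm.mul_apply, AX_pivot, F_at_castSucc_r]

lemma BO_oCast : BO G r o t o.castSucc = t.succAbove r := by
  rw [BO, Perm.mul_apply, AO_oCast _ _ _ _ (Fin.castSucc_lt_last o), F_at_castSucc_r]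

lemma BO_last (ho : G.σO o = r) : BO G r o t (Fin.last n) = t := by
  rw [BO, Perm.mul_apply, AO_pivot _ _ _ _ (Fin.castSucc_lt_last o), ho, hat_to_t_r]

lemma BO_castSucc (hk : k ≠ o) (hOk : G.σO k ≠ r) :
    BO G r o t k.castSucc = t.succAbove (G.σO k) := by
  rw [BO, Perm.mul_apply, castSucc_eq_last_succAbove,
    AO_succAbove _ _ _ _ _ (Fin.castSucc_lt_last o) hk, hat_to_t hOk]

end evals

section disj

variable {G : Grid n} {r w o x : Fin n}

lemma disjA [NeZero n] (ho : G.σO o = r) (ho0 : o ≠ 0) (hr : G.σX 0 = r) {c : Fin (n + 1)}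
    (hoc : o.castSucc < c) : ∀ j, AX G r c j ≠ AO G r o c j := by
  intro j
  rcases eq_or_ne j c with rfl | hjc
  · rw [AX_pivot, AO_pivot _ _ _ _ hoc, ho, Fin.succAbove_castSucc_self]
    exact (Fin.castSucc_lt_succ (i := r)).ne
  rcases eq_or_ne j o.castSucc with rfl | hjo
  · rw [AO_oCast _ _ _ _ hoc, ← Fin.succAbove_of_castSucc_lt _ _ hoc, AX_succAbove]
    exact Fin.succAbove_ne _ _
  · obtain ⟨k, rfl⟩ := Fin.exists_succAbove_eq hjc
    have hko : k ≠ o := fun h => hjo (by rw [h, Fin.succAbove_of_castSucc_lt _ _ hoc])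
    rw [AX_succAbove, AO_succAbove _ _ _ _ _ hoc hko]
    exact fun h => G.disj k (Fin.succAbove_right_inj.mp h)

lemma disjB [NeZero n] (ho : G.σO o = r) (ho0 : o ≠ 0) (hr : G.σX 0 = r) {t : Fin (n + 1)} :
    ∀ j, BX G r t j ≠ BO G r o t j := fun j => by
  rw [BX, BO, Perm.mul_apply, Perm.mul_apply]
  exact (Equiv.injective _).ne (disjA ho ho0 hr (Fin.castSucc_lt_last o) j)

lemma disjC [NeZero n] (ho : G.σO o = r) (ho0 : o ≠ 0) (hr : G.σX 0 = r) {p : Fin (n + 1)} :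
    ∀ j, CX G r w p j ≠ CO G r w o p j := fun j => by
  rw [CX, CO, Perm.mul_apply, Perm.mul_apply]
  exact disjB ho ho0 hr _

/-- The intermediate grids. -/
def gridA [NeZero n] (ho : G.σO o = r) (ho0 : o ≠ 0) (hr : G.σX 0 = r) (c : Fin (n + 1))
    (hoc : o.castSucc < c) : Grid (n + 1) :=
  ⟨AX G r c, AO G r o c, disjA ho ho0 hr hoc⟩

def gridB [NeZero n] (ho : G.σO o = r) (ho0 : o ≠ 0) (hr : G.σX 0 = r) (t : Fin (n + 1)) :
    Grid (n + 1) :=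
  ⟨BX G r t, BO G r o t, disjB ho ho0 hr⟩

def gridC [NeZero n] (ho : G.σO o = r) (ho0 : o ≠ 0) (hr : G.σX 0 = r) (w : Fin n) (p : Fin (n + 1)) :
    Grid (n + 1) :=
  ⟨CX G r w p, CO G r w o p, disjC ho ho0 hr⟩

end disj

end Stmt11
namespace Stmt11
open Equiv Grid

lemma grid_ext {m : ℕ} {P Q : Grid m} (h1 : P.σX = Q.σX) (h2 : P.σO = Q.σO) : P = Q := by
  cases P; cases Q; simp_all

section Core

variable {n : ℕ} [NeZero n] {G : Grid n} {r w o x : Fin n}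

lemma csucc_ne (m : Fin n) (hm : m ≠ r) : r.castSucc.succAbove m ≠ r.succ := by
  intro h
  rw [← Fin.succAbove_castSucc_self r] at h
  exact hm (Fin.succAbove_right_inj.mp h)

lemma ssucc_ne (m : Fin n) (hm : m ≠ w) : w.succ.succAbove m ≠ w.castSucc := by
  intro h
  rw [← Fin.succAbove_succ_self w] at h
  exact hm (Fin.succAbove_right_inj.mp h)

lemma cast_lt_succ_of_lt {a b : Fin n} (h : a < b) : a.castSucc < b.succ := by
  rw [Fin.lt_def, Fin.coe_castSucc, Fin.val_succ]
  exact Nat.lt_succ_of_lt (Fin.lt_def.mp h)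

lemma val_add_one_of (hn2 : 2 ≤ n) (k : Fin n) :
    ((k + 1 : Fin n) : ℕ) = if (k : ℕ) + 1 = n then 0 else (k : ℕ) + 1 := by
  have h1 : ((1 : Fin n) : ℕ) = 1 := by
    rw [Fin.val_one']; exact Nat.mod_eq_of_lt (by omega)
  have := k.isLt
  rw [Fin.val_add, h1]
  split <;> rename_i h
  · rw [h, Nat.mod_self]
  · exact Nat.mod_eq_of_lt (by omega)

/-! ### The stabilization move -/

lemma stabA (ho : G.σO o = r) (ho0 : o ≠ 0) (hr : G.σX 0 = r) :
    IsStabONW G (gridA ho ho0 hr o.succ (Fin.castSucc_lt_succ (i := o))) := by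
  refine ⟨o, fun k => ?_, fun k hk => ?_, ?_, ?_, ?_⟩
  · show AX G r o.succ (o.succ.succAbove k) = _
    rw [AX_succAbove, ho]
  · show AO G r o o.succ (o.succ.succAbove k) = _
    rw [AO_succAbove _ _ _ _ _ (Fin.castSucc_lt_succ (i := o)) hk, ho]
  · show AO G r o o.succ (o.succ.succAbove o) = _
    rw [Fin.succAbove_succ_self, AO_oCast _ _ _ _ (Fin.castSucc_lt_succ (i := o)), ho]
  · show AO G r o o.succ o.succ = _
    rw [AO_pivot _ _ _ _ (Fin.castSucc_lt_succ (i := o)), ho]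
  · show AX G r o.succ o.succ = _
    rw [AX_pivot, ho]

/-! ### Phase A commutations -/

lemma moveA_step (ho : G.σO o = r) (ho0 : o ≠ 0) (hr : G.σX 0 = r) (u : Fin n)
    (hou : o < u) :
    PlanarColComm (gridA ho ho0 hr u.castSucc (Fin.castSucc_lt_castSucc_iff.mpr hou))
      (gridA ho ho0 hr u.succ
        ((Fin.castSucc_lt_castSucc_iff.mpr hou).trans (Fin.castSucc_lt_succ (i := u)))) := by
  have hoc : o.castSucc < u.castSucc := Fin.castSucc_lt_castSucc_iff.mpr hou
  have hu0 : u ≠ 0 := by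
    intro h; subst h; exact absurd (Fin.lt_def.mp hou) (by simp)
  have hXu : G.σX u ≠ r := fun h => hu0 (G.σX.injective (h.trans hr.symm))
  have hOu : G.σO u ≠ r := fun h => hou.ne' (G.σO.injective (h.trans ho.symm))
  have vXc : (gridA ho ho0 hr u.castSucc hoc).σX u.castSucc = r.castSucc := AX_pivot G r _
  have vOc : (gridA ho ho0 hr u.castSucc hoc).σO u.castSucc = r.succ := by
    show AO G r o u.castSucc u.castSucc = _
    rw [AO_pivot _ _ _ _ hoc, ho, Fin.succAbove_castSucc_self]
  have vXs : (gridA ho ho0 hr u.castSucc hoc).σX u.succ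
      = r.castSucc.succAbove (G.σX u) := by
    show AX G r u.castSucc u.succ = _
    conv_lhs => rw [show u.succ = u.castSucc.succAbove u from
      (Fin.succAbove_castSucc_self u).symm]
    rw [AX_succAbove]
  have vOs : (gridA ho ho0 hr u.castSucc hoc).σO u.succ
      = r.castSucc.succAbove (G.σO u) := by
    show AO G r o u.castSucc u.succ = _
    conv_lhs => rw [show u.succ = u.castSucc.succAbove u from
      (Fin.succAbove_castSucc_self u).symm]
    rw [AO_succAbove _ _ _ _ _ hoc hou.ne']
  refine ⟨u.castSucc, u.succ, by simp, ?_, ?_, ?_, ?_, ?_, ?_, ?_⟩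
  · rw [vXs, vXc]; exact Fin.succAbove_ne _ _
  · rw [vXs, vOc]; exact csucc_ne _ hXu
  · rw [vOs, vXc]; exact Fin.succAbove_ne _ _
  · rw [vOs, vOc]; exact csucc_ne _ hOu
  · rw [vXs, vXc, vOs, vOc]
    exact short_pair_cases (by simp) (Fin.succAbove_ne _ _) (csucc_ne _ hXu)
      (Fin.succAbove_ne _ _) (csucc_ne _ hOu)
  · show AX G r u.succ = AX G r u.castSucc * Equiv.swap u.castSucc u.succ
    exact ext_succ u G.σX r.castSucc
  · show AO G r o u.succ = AO G r o u.castSucc * Equiv.swap u.castSucc u.succ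
    rw [AO, AO, ext_succ u G.σO r.castSucc, mul_assoc, mul_assoc,
      swap_swap_comm (Fin.castSucc_lt_succ (i := u)).ne
        ((hoc.trans (Fin.castSucc_lt_succ (i := u))).ne') hoc.ne']

lemma sweepA (ho : G.σO o = r) (ho0 : o ≠ 0) (hr : G.σX 0 = r) :
    Relation.ReflTransGen Move
      ⟨n + 1, gridA ho ho0 hr o.succ (Fin.castSucc_lt_succ (i := o))⟩
      ⟨n + 1, gridA ho ho0 hr (Fin.last n)
        (Fin.castSucc_lt_last o)⟩ := by
  have key : ∀ c : ℕ, (h1 : (o : ℕ) + 1 ≤ c) → (h2 : c ≤ n) →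
      Relation.ReflTransGen Move
        ⟨n + 1, gridA ho ho0 hr o.succ (Fin.castSucc_lt_succ (i := o))⟩
        ⟨n + 1, gridA ho ho0 hr ⟨c, by omega⟩
          (by rw [Fin.lt_def]; simp only [Fin.coe_castSucc]; omega)⟩ := by
    intro c h1 h2
    induction c, h1 using Nat.le_induction with
    | base => exact Relation.ReflTransGen.refl
    | succ c hc ih =>
        refine (ih (by omega)).tail (move_colComm ?_)
        have hcn : c < n := by omega
        have := moveA_step ho ho0 hr ⟨c, hcn⟩ (by rw [Fin.lt_def]; exact (show (o:ℕ) < c by omega))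
        exact this
  exact key n (by have := o.isLt; omega) le_rfl

/-! ### Phase B commutations -/

lemma moveB_step (ho : G.σO o = r) (ho0 : o ≠ 0) (hr : G.σX 0 = r) (hw : G.σO 0 = w)
    (hrw : r < w) (u : Fin n) (hru : r < u) (huw : u < w) :
    PlanarRowComm (gridB ho ho0 hr u.castSucc) (gridB ho ho0 hr u.succ) := by
  have f1 : (gridB ho ho0 hr u.castSucc).σX 0 = u.castSucc := BX_zero _ _ _ hr
  have f2 : (gridB ho ho0 hr u.castSucc).σO (Fin.last n) = u.castSucc := BO_last _ _ _ _ ho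
  have f3 : (gridB ho ho0 hr u.castSucc).σX (Fin.last n) = r.castSucc := by
    show BX G r u.castSucc (Fin.last n) = _
    rw [BX_last, Fin.succAbove_castSucc_of_lt _ _ hru]
  have f4 : (gridB ho ho0 hr u.castSucc).σO 0 = w.succ := by
    show BO G r o u.castSucc 0 = _
    rw [show (0 : Fin (n + 1)) = (0 : Fin n).castSucc from (Fin.ext (by simp)),
      BO_castSucc _ _ _ _ _ (Ne.symm ho0) (by rw [hw]; exact hrw.ne'), hw,
      Fin.succAbove_castSucc_of_le _ _ huw.le]
  have s2 : (gridB ho ho0 hr u.castSucc).σX.symm u.castSucc = 0 :=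
    (Equiv.symm_apply_eq _).mpr f1.symm
  have s4 : (gridB ho ho0 hr u.castSucc).σO.symm u.castSucc = Fin.last n :=
    (Equiv.symm_apply_eq _).mpr f2.symm
  have c2 : (gridB ho ho0 hr u.castSucc).σX.symm u.succ ≠ Fin.last n := by
    intro h
    have h2 := congrArg (gridB ho ho0 hr u.castSucc).σX h
    rw [Equiv.apply_symm_apply, f3] at h2
    have := congrArg Fin.val h2
    simp [Fin.val_succ] at this
    omega
  have c1 : (gridB ho ho0 hr u.castSucc).σX.symm u.succ ≠ 0 := by
    intro h
    have h2 := congrArg (gridB ho ho0 hr u.castSucc).σX h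
    rw [Equiv.apply_symm_apply, f1] at h2
    exact (Fin.castSucc_lt_succ (i := u)).ne' h2
  have c3 : (gridB ho ho0 hr u.castSucc).σO.symm u.succ ≠ 0 := by
    intro h
    have h2 := congrArg (gridB ho ho0 hr u.castSucc).σO h
    rw [Equiv.apply_symm_apply, f4] at h2
    have := congrArg Fin.val h2
    rw [Fin.lt_def] at huw
    simp [Fin.val_succ] at this
    omega
  have c4 : (gridB ho ho0 hr u.castSucc).σO.symm u.succ ≠ Fin.last n := by
    intro h
    have h2 := congrArg (gridB ho ho0 hr u.castSucc).σO h
    rw [Equiv.apply_symm_apply, f2] at h2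
    exact (Fin.castSucc_lt_succ (i := u)).ne' h2
  refine ⟨u.castSucc, u.succ, by simp, ?_, ?_, ?_, ?_, ?_, ?_, ?_⟩
  · exact fun h => (Fin.castSucc_lt_succ (i := u)).ne'
      ((gridB ho ho0 hr u.castSucc).σX.symm.injective h)
  · rw [s4]; exact c2
  · rw [s2]; exact c3
  · exact fun h => (Fin.castSucc_lt_succ (i := u)).ne'
      ((gridB ho ho0 hr u.castSucc).σO.symm.injective h)
  · rw [s2, s4]
    exact long_pair_cases rfl (by simp) c1 c2 c3 c4
  · show BX G r u.succ = Equiv.swap u.castSucc u.succ * BX G r u.castSucc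
    rw [BX, BX, ext_one_succ, mul_assoc]
  · show BO G r o u.succ = Equiv.swap u.castSucc u.succ * BO G r o u.castSucc
    rw [BO, BO, ext_one_succ, mul_assoc]

lemma sweepB (ho : G.σO o = r) (ho0 : o ≠ 0) (hr : G.σX 0 = r) (hw : G.σO 0 = w)
    (hrw : r < w) :
    Relation.ReflTransGen Move
      ⟨n + 1, gridB ho ho0 hr r.succ⟩
      ⟨n + 1, gridB ho ho0 hr w.castSucc⟩ := by
  have key : ∀ c : ℕ, (h1 : (r : ℕ) + 1 ≤ c) → (h2 : c ≤ (w : ℕ)) →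
      Relation.ReflTransGen Move
        ⟨n + 1, gridB ho ho0 hr r.succ⟩
        ⟨n + 1, gridB ho ho0 hr ⟨c, by have := w.isLt; omega⟩⟩ := by
    intro c h1 h2
    induction c, h1 using Nat.le_induction with
    | base => exact Relation.ReflTransGen.refl
    | succ c hc ih =>
        refine (ih (by omega)).tail (move_rowComm ?_)
        have hcn : c < n := by have := w.isLt; omega
        have := moveB_step ho ho0 hr hw hrw ⟨c, hcn⟩
          (by rw [Fin.lt_def]; exact (show (r:ℕ) < c by omega))
          (by rw [Fin.lt_def]; exact (show c < (w:ℕ) by omega))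
        exact this
  exact key w (by rw [Fin.lt_def] at hrw; omega) le_rfl

/-! ### Unified evaluations at successor positions -/

lemma BX_succ (hn2 : 2 ≤ n) (hr : G.σX 0 = r) (hx : G.σX x = w) (hrw : r < w)
    (k : Fin n) (hk1 : k + 1 ≠ x) :
    BX G r w.castSucc k.succ = w.succ.succAbove (G.σX (k + 1)) := by
  have hv := val_add_one_of hn2 k
  by_cases hn : (k : ℕ) + 1 = n
  · have hk0 : k + 1 = 0 := Fin.ext (by rw [hv]; simp [hn])
    have hlast : k.succ = Fin.last n := Fin.ext (by simpa using hn)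
    rw [hlast, BX_last, hk0, hr, Fin.succAbove_castSucc_of_lt _ _ hrw,
      Fin.succAbove_of_castSucc_lt _ _ (cast_lt_succ_of_lt hrw)]
  · have hvk : ((k + 1 : Fin n) : ℕ) = (k : ℕ) + 1 := by rw [hv]; simp [hn]
    have hcs : k.succ = (k + 1 : Fin n).castSucc := Fin.ext (by simp [hvk])
    have hne0 : (k + 1 : Fin n) ≠ 0 := fun h => by rw [h] at hvk; simp at hvk
    have hXne : G.σX (k + 1) ≠ r := fun h => hne0 (G.σX.injective (h.trans hr.symm))
    have hXnw : G.σX (k + 1) ≠ w := fun h => hk1 (G.σX.injective (h.trans hx.symm))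
    rw [hcs, BX_castSucc _ _ _ _ hXne, succAbove_castSucc_eq_succ hXnw]

lemma BO_succ (hn2 : 2 ≤ n) (ho : G.σO o = r) (hw : G.σO 0 = w) (hrw : r < w)
    (k : Fin n) :
    BO G r o w.castSucc k.succ = w.succ.succAbove (G.σO (k + 1)) := by
  have hv := val_add_one_of hn2 k
  by_cases hn : (k : ℕ) + 1 = n
  · have hk0 : k + 1 = 0 := Fin.ext (by rw [hv]; simp [hn])
    have hlast : k.succ = Fin.last n := Fin.ext (by simpa using hn)
    rw [hlast, BO_last _ _ _ _ ho, hk0, hw, Fin.succAbove_succ_self]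
  · have hvk : ((k + 1 : Fin n) : ℕ) = (k : ℕ) + 1 := by rw [hv]; simp [hn]
    have hcs : k.succ = (k + 1 : Fin n).castSucc := Fin.ext (by simp [hvk])
    have hne0 : (k + 1 : Fin n) ≠ 0 := fun h => by rw [h] at hvk; simp at hvk
    by_cases hko : k + 1 = o
    · rw [hcs, hko, BO_oCast, ho, Fin.succAbove_castSucc_of_lt _ _ hrw,
        Fin.succAbove_of_castSucc_lt _ _ (cast_lt_succ_of_lt hrw)]
    · have hOne : G.σO (k + 1) ≠ r := fun h => hko (G.σO.injective (h.trans ho.symm))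
      have hOnw : G.σO (k + 1) ≠ w := fun h => hne0 (G.σO.injective (h.trans hw.symm))
      rw [hcs, BO_castSucc _ _ _ _ _ hko hOne, succAbove_castSucc_eq_succ hOnw]

lemma CX_pivot' (hr : G.σX 0 = r) (p : Fin (n + 1)) : CX G r w p p = w.castSucc := by
  rw [CX, Perm.mul_apply, ext_pivot, BX_zero _ _ _ hr]

lemma CO_pivot' (ho0 : o ≠ 0) (hw : G.σO 0 = w) (hrw : r < w) (p : Fin (n + 1)) :
    CO G r w o p p = w.succ := by
  rw [CO, Perm.mul_apply, ext_pivot,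
    show (0 : Fin (n + 1)) = (0 : Fin n).castSucc from (Fin.ext (by simp)),
    BO_castSucc _ _ _ _ _ (Ne.symm ho0) (by rw [hw]; exact hrw.ne'), hw,
    Fin.succAbove_castSucc_self]

lemma CX_succAbove (p : Fin (n + 1)) (k : Fin n) :
    CX G r w p (p.succAbove k) = BX G r w.castSucc k.succ := by
  rw [CX, Perm.mul_apply, ext_succAbove, Perm.one_apply, Fin.succAbove_zero_apply]

lemma CO_succAbove (p : Fin (n + 1)) (k : Fin n) :
    CO G r w o p (p.succAbove k) = BO G r o w.castSucc k.succ := by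
  rw [CO, Perm.mul_apply, ext_succAbove, Perm.one_apply, Fin.succAbove_zero_apply]

/-! ### Phase C commutations -/

lemma moveC_step (hn2 : 2 ≤ n) (ho : G.σO o = r) (ho0 : o ≠ 0) (hr : G.σX 0 = r)
    (hw : G.σO 0 = w) (hx : G.σX x = w) (hrw : r < w) (u : Fin n)
    (hux : (u : ℕ) + 1 < (x : ℕ)) :
    PlanarColComm (gridC ho ho0 hr w u.castSucc) (gridC ho ho0 hr w u.succ) := by
  have hxval := x.isLt
  have hvk : ((u + 1 : Fin n) : ℕ) = (u : ℕ) + 1 := by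
    rw [val_add_one_of hn2]; have := u.isLt
    split <;> omega
  have hk1 : u + 1 ≠ x := fun h => by rw [h] at hvk; omega
  have hne0 : (u + 1 : Fin n) ≠ 0 := fun h => by rw [h] at hvk; simp at hvk
  have hXnw : G.σX (u + 1) ≠ w := fun h => hk1 (G.σX.injective (h.trans hx.symm))
  have hOnw : G.σO (u + 1) ≠ w := fun h => hne0 (G.σO.injective (h.trans hw.symm))
  have vX1 : (gridC ho ho0 hr w u.castSucc).σX u.castSucc = w.castSucc := CX_pivot' hr _
  have vO1 : (gridC ho ho0 hr w u.castSucc).σO u.castSucc = w.succ :=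
    CO_pivot' ho0 hw hrw _
  have vX2 : (gridC ho ho0 hr w u.castSucc).σX u.succ
      = w.succ.succAbove (G.σX (u + 1)) := by
    show CX G r w u.castSucc u.succ = _
    conv_lhs => rw [show u.succ = u.castSucc.succAbove u from
      (Fin.succAbove_castSucc_self u).symm]
    rw [CX_succAbove, BX_succ hn2 hr hx hrw u hk1]
  have vO2 : (gridC ho ho0 hr w u.castSucc).σO u.succ
      = w.succ.succAbove (G.σO (u + 1)) := by
    show CO G r w o u.castSucc u.succ = _
    conv_lhs => rw [show u.succ = u.castSucc.succAbove u from
      (Fin.succAbove_castSucc_self u).symm]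
    rw [CO_succAbove, BO_succ hn2 ho hw hrw u]
  refine ⟨u.castSucc, u.succ, by simp, ?_, ?_, ?_, ?_, ?_, ?_, ?_⟩
  · rw [vX2, vX1]; exact ssucc_ne _ hXnw
  · rw [vX2, vO1]; exact Fin.succAbove_ne _ _
  · rw [vO2, vX1]; exact ssucc_ne _ hOnw
  · rw [vO2, vO1]; exact Fin.succAbove_ne _ _
  · rw [vX1, vO1, vX2, vO2]
    exact short_pair_cases (by simp) (ssucc_ne _ hXnw) (Fin.succAbove_ne _ _)
      (ssucc_ne _ hOnw) (Fin.succAbove_ne _ _)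
  · show CX G r w u.succ = CX G r w u.castSucc * Equiv.swap u.castSucc u.succ
    rw [CX, CX, ext_succ, mul_assoc]
  · show CO G r w o u.succ = CO G r w o u.castSucc * Equiv.swap u.castSucc u.succ
    rw [CO, CO, ext_succ, mul_assoc]

lemma sweepC (hn2 : 2 ≤ n) (ho : G.σO o = r) (ho0 : o ≠ 0) (hr : G.σX 0 = r)
    (hw : G.σO 0 = w) (hx : G.σX x = w) (hrw : r < w) :
    Relation.ReflTransGen Move
      ⟨n + 1, gridC ho ho0 hr w 0⟩
      ⟨n + 1, gridC ho ho0 hr w ⟨(x : ℕ) - 1, by have := x.isLt; omega⟩⟩ := by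
  have key : ∀ c : ℕ, (h2 : c ≤ (x : ℕ) - 1) →
      Relation.ReflTransGen Move
        ⟨n + 1, gridC ho ho0 hr w 0⟩
        ⟨n + 1, gridC ho ho0 hr w ⟨c, by have := x.isLt; omega⟩⟩ := by
    intro c h2
    induction c with
    | zero => exact Relation.ReflTransGen.refl
    | succ c ih =>
        refine (ih (by omega)).tail (move_colComm ?_)
        have hcn : c < n := by have := x.isLt; omega
        have := moveC_step hn2 ho ho0 hr hw hx hrw ⟨c, hcn⟩ (show c + 1 < (x:ℕ) by omega)
        exact this
  exact key ((x : ℕ) - 1) le_rfl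

end Core
end Stmt11
namespace Stmt11
open Equiv Grid

section Core

variable {n : ℕ} [NeZero n] {G : Grid n} {r w o x : Fin n}

lemma destabC (hn2 : 2 ≤ n) (ho : G.σO o = r) (ho0 : o ≠ 0) (hr : G.σX 0 = r)
    (hw : G.σO 0 = w) (hx : G.σX x = w) (hrw : r < w) (hx0 : x ≠ 0)
    (T : Grid n) (hTX : T.σX = (Equiv.addRight (1 : Fin n)).trans G.σX)
    (hTO : T.σO = (Equiv.addRight (1 : Fin n)).trans G.σO) :
    IsStabXSE T (gridC ho ho0 hr w
      (⟨(x : ℕ) - 1, by have := x.isLt; omega⟩ : Fin n).castSucc) := by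
  have hxv : (x : ℕ) ≠ 0 := fun h => hx0 (Fin.ext (by simpa using h))
  set i : Fin n := ⟨(x : ℕ) - 1, by have := x.isLt; omega⟩ with hi
  have hvi : ((i + 1 : Fin n) : ℕ) = (x : ℕ) := by
    rw [val_add_one_of hn2]
    have := x.isLt
    have hiv : (i : ℕ) = (x : ℕ) - 1 := rfl
    split <;> omega
  have hix : i + 1 = x := Fin.ext hvi
  have hTX' : ∀ k, T.σX k = G.σX (k + 1) := fun k => by rw [hTX]; rfl
  have hTO' : ∀ k, T.σO k = G.σO (k + 1) := fun k => by rw [hTO]; rfl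
  have hTXi : T.σX i = w := by rw [hTX' i, hix, hx]
  refine ⟨i, fun k => ?_, fun k hk => ?_, ?_, ?_, ?_⟩
  · show CO G r w o i.castSucc (i.castSucc.succAbove k) = _
    rw [CO_succAbove, BO_succ hn2 ho hw hrw k, hTXi, hTO' k]
  · show CX G r w i.castSucc (i.castSucc.succAbove k) = _
    have hki : k + 1 ≠ x := by
      intro h
      apply hk
      apply Fin.ext
      have hvk := val_add_one_of hn2 k
      rw [h] at hvk
      have := k.isLt
      simp [hi]
      split at hvk <;> omega
    rw [CX_succAbove, BX_succ hn2 hr hx hrw k hki, hTXi, hTX' k]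
  · show CX G r w i.castSucc (i.castSucc.succAbove i) = _
    have hisucc : i.succ = x.castSucc := Fin.ext (by simp [hi]; omega)
    rw [CX_succAbove, hisucc, BX_castSucc _ _ _ _ (by rw [hx]; exact hrw.ne'), hx,
      Fin.succAbove_castSucc_self, hTXi]
  · show CX G r w i.castSucc i.castSucc = _
    rw [CX_pivot' hr, hTXi, Fin.succAbove_succ_self]
  · show CO G r w o i.castSucc i.castSucc = _
    rw [CO_pivot' ho0 hw hrw, hTXi]

end Core

/-- Core lemma: the cyclic column permutation, in the case where the `O` of column `0`
lies above its `X`. -/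
lemma colshift_of_lt {n : ℕ} [NeZero n] (G T : Grid n) (hlt : G.σX 0 < G.σO 0)
    (hTX : T.σX = (Equiv.addRight (1 : Fin n)).trans G.σX)
    (hTO : T.σO = (Equiv.addRight (1 : Fin n)).trans G.σO) :
    Relation.ReflTransGen Move ⟨n, G⟩ ⟨n, T⟩ := by
  have hn2 : 2 ≤ n := by
    have h1 := (G.σO 0).isLt
    have h2 := Fin.lt_def.mp hlt
    omega
  have ho : G.σO (G.σO.symm (G.σX 0)) = G.σX 0 := G.σO.apply_symm_apply _
  have hx : G.σX (G.σX.symm (G.σO 0)) = G.σO 0 := G.σX.apply_symm_apply _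
  have ho0 : G.σO.symm (G.σX 0) ≠ 0 := fun h => hlt.ne' (by rw [← ho, h])
  have hx0 : G.σX.symm (G.σO 0) ≠ 0 := fun h => hlt.ne (by rw [← hx, h])
  have m0 : Move (⟨n, G⟩ : GridS)
      ⟨n + 1, gridA ho ho0 rfl (G.σO.symm (G.σX 0)).succ (Fin.castSucc_lt_succ (i := _))⟩ :=
    move_stabONW (stabA ho ho0 rfl)
  have s1 := sweepA ho ho0 rfl
  have bridge1 : (⟨n + 1, gridA ho ho0 rfl (Fin.last n) (Fin.castSucc_lt_last _)⟩ : GridS)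
      = ⟨n + 1, gridB ho ho0 rfl (G.σX 0).succ⟩ := by
    refine congrArg (fun g => (⟨n + 1, g⟩ : GridS)) (grid_ext ?_ ?_)
    · show AX G (G.σX 0) (Fin.last n) = BX G (G.σX 0) (G.σX 0).succ
      rw [BX, ext_one_self, one_mul]
    · show AO G (G.σX 0) _ (Fin.last n) = BO G (G.σX 0) _ (G.σX 0).succ
      rw [BO, ext_one_self, one_mul]
  have s2 := sweepB ho ho0 rfl rfl hlt
  have bridge2 : (⟨n + 1, gridB ho ho0 rfl (G.σO 0).castSucc⟩ : GridS)
      = ⟨n + 1, gridC ho ho0 rfl (G.σO 0) 0⟩ := by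
    refine congrArg (fun g => (⟨n + 1, g⟩ : GridS)) (grid_ext ?_ ?_)
    · show BX G (G.σX 0) (G.σO 0).castSucc = CX G (G.σX 0) (G.σO 0) 0
      rw [CX, ext_one_self, mul_one]
    · show BO G (G.σX 0) _ (G.σO 0).castSucc = CO G (G.σX 0) (G.σO 0) _ 0
      rw [CO, ext_one_self, mul_one]
  have s3 := sweepC hn2 ho ho0 rfl rfl hx hlt
  have mEnd : Move
      (⟨n + 1, gridC ho ho0 rfl (G.σO 0)
        ⟨(G.σX.symm (G.σO 0) : ℕ) - 1,
          by have := (G.σX.symm (G.σO 0)).isLt; omega⟩⟩ : GridS)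
      ⟨n, T⟩ :=
    move_destabXSE (destabC hn2 ho ho0 rfl rfl hx hlt hx0 T hTX hTO)
  refine Relation.ReflTransGen.head m0 ?_
  refine Relation.ReflTransGen.trans s1 ?_
  rw [bridge1]
  refine Relation.ReflTransGen.trans s2 ?_
  rw [bridge2]
  exact Relation.ReflTransGen.trans s3 (Relation.ReflTransGen.single mEnd)

end Stmt11
namespace Stmt11
open Equiv Grid

variable {m : ℕ}

/-! ### Symmetry of moves -/

lemma comm_cond_flip {a b c d : Fin m}
    (h : max a b < min c d ∨ max c d < min a b ∨
      (min a b < min c d ∧ max c d < max a b) ∨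
      (min c d < min a b ∧ max a b < max c d)) :
    max c d < min a b ∨ max a b < min c d ∨
      (min c d < min a b ∧ max a b < max c d) ∨
      (min a b < min c d ∧ max c d < max a b) := by tauto

lemma comm_cond_swapXO {a b c d : Fin m}
    (h : max a b < min c d ∨ max c d < min a b ∨
      (min a b < min c d ∧ max c d < max a b) ∨
      (min c d < min a b ∧ max a b < max c d)) :
    max b a < min d c ∨ max d c < min b a ∨
      (min b a < min d c ∧ max d c < max b a) ∨
      (min d c < min b a ∧ max b a < max d c) := by
  rw [max_comm b a, max_comm d c, min_comm b a, min_comm d c]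
  exact h

lemma planarColComm_symm {P Q : Grid m} (h : PlanarColComm P Q) : PlanarColComm Q P := by
  obtain ⟨i, i', h0, h1, h2, h3, h4, h5, h6, h7⟩ := h
  have vX : ∀ j, Q.σX j = P.σX (Equiv.swap i i' j) := fun j => by
    rw [h6, Perm.mul_apply]
  have vO : ∀ j, Q.σO j = P.σO (Equiv.swap i i' j) := fun j => by
    rw [h7, Perm.mul_apply]
  have eX : P.σX = Q.σX * Equiv.swap i i' := by
    rw [h6, mul_assoc, Equiv.swap_mul_self, mul_one]
  have eO : P.σO = Q.σO * Equiv.swap i i' := by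
    rw [h7, mul_assoc, Equiv.swap_mul_self, mul_one]
  refine ⟨i, i', h0, ?_, ?_, ?_, ?_, ?_, eX, eO⟩
  · rw [vX, vX, Equiv.swap_apply_left, Equiv.swap_apply_right]; exact h1.symm
  · rw [vX, vO, Equiv.swap_apply_left, Equiv.swap_apply_right]; exact h3.symm
  · rw [vO, vX, Equiv.swap_apply_left, Equiv.swap_apply_right]; exact h2.symm
  · rw [vO, vO, Equiv.swap_apply_left, Equiv.swap_apply_right]; exact h4.symm
  · rw [vX i, vX i', vO i, vO i', Equiv.swap_apply_left, Equiv.swap_apply_right]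
    exact comm_cond_flip h5

lemma planarRowComm_symm {P Q : Grid m} (h : PlanarRowComm P Q) : PlanarRowComm Q P := by
  obtain ⟨i, i', h0, h1, h2, h3, h4, h5, h6, h7⟩ := h
  have vX : Q.σX.symm = P.σX.symm * Equiv.swap i i' := by
    show Q.σX⁻¹ = P.σX⁻¹ * Equiv.swap i i'
    rw [h6, mul_inv_rev, Equiv.swap_inv]
  have vO : Q.σO.symm = P.σO.symm * Equiv.swap i i' := by
    show Q.σO⁻¹ = P.σO⁻¹ * Equiv.swap i i'
    rw [h7, mul_inv_rev, Equiv.swap_inv]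
  have eX : P.σX = Equiv.swap i i' * Q.σX := by
    rw [h6, ← mul_assoc, Equiv.swap_mul_self, one_mul]
  have eO : P.σO = Equiv.swap i i' * Q.σO := by
    rw [h7, ← mul_assoc, Equiv.swap_mul_self, one_mul]
  have wX : ∀ j, Q.σX.symm j = P.σX.symm (Equiv.swap i i' j) := fun j => by
    rw [vX, Perm.mul_apply]
  have wO : ∀ j, Q.σO.symm j = P.σO.symm (Equiv.swap i i' j) := fun j => by
    rw [vO, Perm.mul_apply]
  refine ⟨i, i', h0, ?_, ?_, ?_, ?_, ?_, eX, eO⟩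
  · rw [wX, wX, Equiv.swap_apply_left, Equiv.swap_apply_right]; exact h1.symm
  · rw [wX, wO, Equiv.swap_apply_left, Equiv.swap_apply_right]; exact h3.symm
  · rw [wO, wX, Equiv.swap_apply_left, Equiv.swap_apply_right]; exact h2.symm
  · rw [wO, wO, Equiv.swap_apply_left, Equiv.swap_apply_right]; exact h4.symm
  · rw [wX i, wX i', wO i, wO i', Equiv.swap_apply_left, Equiv.swap_apply_right]
    exact comm_cond_flip h5

lemma move_symm {p q : GridS} (h : Move p q) : Move q p := by
  rcases h with ⟨k, P, Q, hp, hq, hc⟩ | ⟨k, P, Q, htypes, hpq⟩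
  · exact Or.inl ⟨k, Q, P, hq, hp, hc.imp planarColComm_symm planarRowComm_symm⟩
  · rcases hpq with ⟨h1, h2⟩ | ⟨h1, h2⟩
    · exact Or.inr ⟨k, P, Q, htypes, Or.inr ⟨h2, h1⟩⟩
    · exact Or.inr ⟨k, P, Q, htypes, Or.inl ⟨h2, h1⟩⟩

lemma rtg_symm {α : Type*} {r : α → α → Prop} (hr : ∀ a b, r a b → r b a) {a b : α}
    (h : Relation.ReflTransGen r a b) : Relation.ReflTransGen r b a := by
  induction h with
  | refl => exact .refl
  | tail _ hbc ih => exact Relation.ReflTransGen.head (hr _ _ hbc) ih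

/-! ### The X ↔ O swap functor -/

def swapG (P : Grid m) : Grid m := ⟨P.σO, P.σX, fun i => (P.disj i).symm⟩

def swapS (p : GridS) : GridS := ⟨p.1, swapG p.2⟩

lemma planarColComm_swapG {P Q : Grid m} (h : PlanarColComm P Q) :
    PlanarColComm (swapG P) (swapG Q) := by
  obtain ⟨i, i', h0, h1, h2, h3, h4, h5, h6, h7⟩ := h
  exact ⟨i, i', h0, h4, h3, h2, h1, comm_cond_swapXO h5, h7, h6⟩

lemma planarRowComm_swapG {P Q : Grid m} (h : PlanarRowComm P Q) :
    PlanarRowComm (swapG P) (swapG Q) := by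
  obtain ⟨i, i', h0, h1, h2, h3, h4, h5, h6, h7⟩ := h
  exact ⟨i, i', h0, h4, h3, h2, h1, comm_cond_swapXO h5, h7, h6⟩

lemma move_swap {p q : GridS} (h : Move p q) : Move (swapS p) (swapS q) := by
  rcases h with ⟨k, P, Q, hp, hq, hc⟩ | ⟨k, P, Q, htypes, hpq⟩
  · exact Or.inl ⟨k, swapG P, swapG Q, by rw [hp]; rfl, by rw [hq]; rfl,
      hc.imp planarColComm_swapG planarRowComm_swapG⟩
  · refine Or.inr ⟨k, swapG P, swapG Q, ?_, ?_⟩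
    · rcases htypes with h | h | h | h
      · exact Or.inr (Or.inr (Or.inl h))
      · exact Or.inr (Or.inr (Or.inr h))
      · exact Or.inl h
      · exact Or.inr (Or.inl h)
    · rcases hpq with ⟨h1, h2⟩ | ⟨h1, h2⟩
      · exact Or.inl ⟨by rw [h1]; rfl, by rw [h2]; rfl⟩
      · exact Or.inr ⟨by rw [h1]; rfl, by rw [h2]; rfl⟩

/-! ### The transposition functor -/

def trG (P : Grid m) : Grid m :=
  ⟨P.σX.symm, P.σO.symm, fun i h => P.disj (P.σX.symm i)
    (by rw [Equiv.apply_symm_apply, h, Equiv.apply_symm_apply])⟩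

def trS (p : GridS) : GridS := ⟨p.1, trG p.2⟩

lemma trG_trG (P : Grid m) : trG (trG P) = P := grid_ext (Equiv.symm_symm _) (Equiv.symm_symm _)

lemma planarColComm_trG {P Q : Grid m} (h : PlanarColComm P Q) :
    PlanarRowComm (trG P) (trG Q) := by
  obtain ⟨i, i', h0, h1, h2, h3, h4, h5, h6, h7⟩ := h
  refine ⟨i, i', h0, h1, h2, h3, h4, h5, ?_, ?_⟩
  · show Q.σX⁻¹ = Equiv.swap i i' * P.σX⁻¹
    rw [h6, mul_inv_rev, Equiv.swap_inv]
  · show Q.σO⁻¹ = Equiv.swap i i' * P.σO⁻¹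
    rw [h7, mul_inv_rev, Equiv.swap_inv]

lemma planarRowComm_trG {P Q : Grid m} (h : PlanarRowComm P Q) :
    PlanarColComm (trG P) (trG Q) := by
  obtain ⟨i, i', h0, h1, h2, h3, h4, h5, h6, h7⟩ := h
  refine ⟨i, i', h0, h1, h2, h3, h4, h5, ?_, ?_⟩
  · show Q.σX⁻¹ = P.σX⁻¹ * Equiv.swap i i'
    rw [h6, mul_inv_rev, Equiv.swap_inv]
  · show Q.σO⁻¹ = P.σO⁻¹ * Equiv.swap i i'
    rw [h7, mul_inv_rev, Equiv.swap_inv]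

lemma isStabXAt_trG {P : Grid m} {Q : Grid (m + 1)} {i : Fin m} {cT rT : Fin (m + 1)}
    (h : IsStabXAt P Q i cT rT) : IsStabXAt (trG P) (trG Q) (P.σX i) rT cT := by
  obtain ⟨h1, h2, h3, h4, h5⟩ := h
  refine ⟨fun k => ?_, fun k hk => ?_, ?_, ?_, ?_⟩
  · have := h1 (P.σO.symm k)
    rw [Equiv.apply_symm_apply] at this
    exact (Equiv.symm_apply_eq _).mpr this.symm
  · have hki : P.σX.symm k ≠ i := fun hh => hk (by rw [← hh, Equiv.apply_symm_apply])
    have := h2 (P.σX.symm k) hki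
    rw [Equiv.apply_symm_apply] at this
    exact (Equiv.symm_apply_eq _).mpr this.symm
  · exact (Equiv.symm_apply_eq _).mpr h4.symm
  · show Q.σX.symm rT = cT.succAbove (P.σX.symm (P.σX i))
    rw [Equiv.symm_apply_apply]
    exact (Equiv.symm_apply_eq _).mpr h3.symm
  · exact (Equiv.symm_apply_eq _).mpr h5.symm

lemma isStabOAt_trG {P : Grid m} {Q : Grid (m + 1)} {i : Fin m} {cT rT : Fin (m + 1)}
    (h : IsStabOAt P Q i cT rT) : IsStabOAt (trG P) (trG Q) (P.σO i) rT cT := by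
  obtain ⟨h1, h2, h3, h4, h5⟩ := h
  refine ⟨fun k => ?_, fun k hk => ?_, ?_, ?_, ?_⟩
  · have := h1 (P.σX.symm k)
    rw [Equiv.apply_symm_apply] at this
    exact (Equiv.symm_apply_eq _).mpr this.symm
  · have hki : P.σO.symm k ≠ i := fun hh => hk (by rw [← hh, Equiv.apply_symm_apply])
    have := h2 (P.σO.symm k) hki
    rw [Equiv.apply_symm_apply] at this
    exact (Equiv.symm_apply_eq _).mpr this.symm
  · exact (Equiv.symm_apply_eq _).mpr h4.symm
  · show Q.σO.symm rT = cT.succAbove (P.σO.symm (P.σO i))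
    rw [Equiv.symm_apply_apply]
    exact (Equiv.symm_apply_eq _).mpr h3.symm
  · exact (Equiv.symm_apply_eq _).mpr h5.symm

lemma isStabXNW_trG {P : Grid m} {Q : Grid (m + 1)} (h : IsStabXNW P Q) :
    IsStabXSE (trG P) (trG Q) := by
  obtain ⟨i, hi⟩ := h
  refine ⟨P.σX i, ?_⟩
  show IsStabXAt (trG P) (trG Q) (P.σX i) ((P.σX i).castSucc) ((P.σX.symm (P.σX i)).succ)
  rw [Equiv.symm_apply_apply]
  exact isStabXAt_trG hi

lemma isStabXSE_trG {P : Grid m} {Q : Grid (m + 1)} (h : IsStabXSE P Q) :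
    IsStabXNW (trG P) (trG Q) := by
  obtain ⟨i, hi⟩ := h
  refine ⟨P.σX i, ?_⟩
  show IsStabXAt (trG P) (trG Q) (P.σX i) ((P.σX i).succ) ((P.σX.symm (P.σX i)).castSucc)
  rw [Equiv.symm_apply_apply]
  exact isStabXAt_trG hi

lemma isStabONW_trG {P : Grid m} {Q : Grid (m + 1)} (h : IsStabONW P Q) :
    IsStabOSE (trG P) (trG Q) := by
  obtain ⟨i, hi⟩ := h
  refine ⟨P.σO i, ?_⟩
  show IsStabOAt (trG P) (trG Q) (P.σO i) ((P.σO i).castSucc) ((P.σO.symm (P.σO i)).succ)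
  rw [Equiv.symm_apply_apply]
  exact isStabOAt_trG hi

lemma isStabOSE_trG {P : Grid m} {Q : Grid (m + 1)} (h : IsStabOSE P Q) :
    IsStabONW (trG P) (trG Q) := by
  obtain ⟨i, hi⟩ := h
  refine ⟨P.σO i, ?_⟩
  show IsStabOAt (trG P) (trG Q) (P.σO i) ((P.σO i).succ) ((P.σO.symm (P.σO i)).castSucc)
  rw [Equiv.symm_apply_apply]
  exact isStabOAt_trG hi

lemma move_tr {p q : GridS} (h : Move p q) : Move (trS p) (trS q) := by
  rcases h with ⟨k, P, Q, hp, hq, hc⟩ | ⟨k, P, Q, htypes, hpq⟩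
  · exact Or.inl ⟨k, trG P, trG Q, by rw [hp]; rfl, by rw [hq]; rfl,
      hc.symm.imp planarRowComm_trG planarColComm_trG⟩
  · refine Or.inr ⟨k, trG P, trG Q, ?_, ?_⟩
    · rcases htypes with h | h | h | h
      · exact Or.inr (Or.inl (isStabXNW_trG h))
      · exact Or.inl (isStabXSE_trG h)
      · exact Or.inr (Or.inr (Or.inr (isStabONW_trG h)))
      · exact Or.inr (Or.inr (Or.inl (isStabOSE_trG h)))
    · rcases hpq with ⟨h1, h2⟩ | ⟨h1, h2⟩
      · exact Or.inl ⟨by rw [h1]; rfl, by rw [h2]; rfl⟩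
      · exact Or.inr ⟨by rw [h1]; rfl, by rw [h2]; rfl⟩

/-! ### The cyclic column permutation, general case -/

lemma colshift_any {n : ℕ} [NeZero n] (G T : Grid n)
    (hTX : T.σX = (Equiv.addRight (1 : Fin n)).trans G.σX)
    (hTO : T.σO = (Equiv.addRight (1 : Fin n)).trans G.σO) :
    Relation.ReflTransGen Move ⟨n, G⟩ ⟨n, T⟩ := by
  rcases lt_trichotomy (G.σX 0) (G.σO 0) with hlt | heq | hgt
  · exact colshift_of_lt G T hlt hTX hTO
  · exact absurd heq (G.disj 0)
  · have key := colshift_of_lt (swapG G) (swapG T) hgt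
      (show T.σO = (Equiv.addRight (1 : Fin n)).trans G.σO from hTO)
      (show T.σX = (Equiv.addRight (1 : Fin n)).trans G.σX from hTX)
    have lifted := Relation.ReflTransGen.lift swapS (fun a b h => move_swap h) _ _ key
    exact lifted

end Stmt11


open Stmt11

/-- If `G'` is obtained from the toroidal grid diagram `G` by a cyclic
permutation of its rows (`σ'_X = s ∘ σ_X`, `σ'_O = s ∘ σ_O`) or of its columns
(`σ'_X = σ_X ∘ s`, `σ'_O = σ_O ∘ s`), where `s(j) = (j+1) mod n`, then `G` can be
transformed into `G'` by a finite sequence of planar commutation moves and of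
stabilization and destabilization moves of types `X:NW`, `X:SE`, `O:NW` and `O:SE`. -/
theorem cyclic_permutation_via_moves {n : ℕ} [NeZero n] (G G' : Grid n)
    (hcyc :
      (G'.σX = G.σX.trans (Equiv.addRight (1 : Fin n)) ∧
        G'.σO = G.σO.trans (Equiv.addRight (1 : Fin n))) ∨
      (G'.σX = (Equiv.addRight (1 : Fin n)).trans G.σX ∧
        G'.σO = (Equiv.addRight (1 : Fin n)).trans G.σO)) :
    Relation.ReflTransGen Move ⟨n, G⟩ ⟨n, G'⟩ := by
  rcases hcyc with ⟨hX, hO⟩ | ⟨hX, hO⟩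
  · have h1 : (trG G).σX = (Equiv.addRight (1 : Fin n)).trans (trG G').σX := by
      refine Equiv.ext fun j => ?_
      show G.σX.symm j = G'.σX.symm (j + 1)
      rw [hX, Equiv.symm_trans_apply]
      congr 1
      rw [Equiv.addRight_symm]
      exact (add_neg_cancel_right j 1).symm
    have h2 : (trG G).σO = (Equiv.addRight (1 : Fin n)).trans (trG G').σO := by
      refine Equiv.ext fun j => ?_
      show G.σO.symm j = G'.σO.symm (j + 1)
      rw [hO, Equiv.symm_trans_apply]
      congr 1
      rw [Equiv.addRight_symm]
      exact (add_neg_cancel_right j 1).symm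
    have key := colshift_any (trG G') (trG G) h1 h2
    have lifted : Relation.ReflTransGen Move (trS ⟨n, trG G'⟩) (trS ⟨n, trG G⟩) :=
      Relation.ReflTransGen.lift trS (fun a b h => move_tr h) _ _ key
    have e1 : trS (⟨n, trG G'⟩ : GridS) = ⟨n, G'⟩ :=
      congrArg (fun g => (⟨n, g⟩ : GridS)) (trG_trG G')
    have e2 : trS (⟨n, trG G⟩ : GridS) = ⟨n, G⟩ :=
      congrArg (fun g => (⟨n, g⟩ : GridS)) (trG_trG G)
    rw [e1, e2] at lifted
    exact rtg_symm (fun a b => move_symm) lifted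
  · exact colshift_any G G' hX hO
end
end

section
/- Let G be a toroidal grid diagram of size n representing a link with ℓ components (ℓ = number of orbits of the permutation τ = σ_O⁻¹∘σ_X). Then the canonical generators satisfy M(x^UR) = 2·Σ_c A_c(x^UR) + 1 − ℓ and M(x^LL) = 2·Σ_c A_c(x^LL) + 1 − ℓ, where the sums run over the orbits c of τ and A_c is the component Alexander grading. -/
open Finset

noncomputable section

open scoped Classical

namespace Grid

variable {n : ℕ}

/-- The permutation `τ = σO⁻¹ ∘ σX`, whose orbits are the components of the link
represented by `G`. -/
def tau (G : Grid n) : Equiv.Perm (Fin n) := G.σO⁻¹ * G.σX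

/-- The setoid on `{0, …, n−1}` whose classes are the orbits of `τ = σO⁻¹ ∘ σX`,
i.e. the components of the link represented by `G`. -/
def compSetoid (G : Grid n) : Setoid (Fin n) :=
  ⟨G.tau.SameCycle,
    ⟨fun x => Equiv.Perm.SameCycle.refl _ _, fun h => h.symm, fun h h' => h.trans h'⟩⟩

/-- The components of the link represented by `G`: the orbits of `τ = σO⁻¹ ∘ σX`. -/
def Comp (G : Grid n) : Type := Quotient G.compSetoid

noncomputable instance (G : Grid n) : Fintype G.Comp :=
  @Quotient.fintype _ _ G.compSetoid fun _ _ => Classical.dec _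

/-- The number `ℓ` of components of the link represented by `G`. -/
def numComp (G : Grid n) : ℕ := Nat.card G.Comp

/-- The number `n_c` of columns belonging to the component `c`. -/
def nComp (G : Grid n) (c : G.Comp) : ℕ :=
  (univ.filter fun i => Quotient.mk G.compSetoid i = c).card

/-- The set `𝕏_c` of `X`-markings of the component `c`, as a formal point
combination. -/
def XXc (G : Grid n) (c : G.Comp) : PtComb :=
  ∑ i ∈ univ.filter fun i => Quotient.mk G.compSetoid i = c,
    Finsupp.single (G.Xpt i) 1

/-- The set `𝕆_c` of `O`-markings of the component `c`, as a formal point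
combination. -/
def OOc (G : Grid n) (c : G.Comp) : PtComb :=
  ∑ i ∈ univ.filter fun i => Quotient.mk G.compSetoid i = c,
    Finsupp.single (G.Opt i) 1

/-- The component Alexander grading
`A_c(x) = J(x − (𝕏+𝕆)/2, 𝕏_c − 𝕆_c) − (n_c − 1)/2`. -/
def Acomp (G : Grid n) (c : G.Comp) (x : Equiv.Perm (Fin n)) : ℚ :=
  Jfun (pts x - (2 : ℚ)⁻¹ • (G.XX + G.OO)) (G.XXc c - G.OOc c)
    - ((G.nComp c : ℚ) - 1) / 2

end Grid

/-! ### Auxiliary machinery for the proof -/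

section AuxBilinear

/-- The inner row of the bilinear extension of `Ifun`. -/
noncomputable def Irow (p : ℝ × ℝ) : PtComb →ₗ[ℚ] ℚ :=
  Finsupp.lsum ℚ fun q => if p.1 < q.1 ∧ p.2 < q.2 then (LinearMap.id : ℚ →ₗ[ℚ] ℚ) else 0

/-- `Ifun` as a bilinear map. -/
noncomputable def ILmap : PtComb →ₗ[ℚ] PtComb →ₗ[ℚ] ℚ :=
  Finsupp.lsum ℚ fun p => LinearMap.toSpanSingleton ℚ _ (Irow p)

lemma Irow_apply (p : ℝ × ℝ) (g : PtComb) :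
    Irow p g = ∑ q ∈ g.support, if p.1 < q.1 ∧ p.2 < q.2 then g q else 0 := by
  rw [Irow, Finsupp.lsum_apply, Finsupp.sum]
  refine Finset.sum_congr rfl fun q hq => ?_
  split_ifs <;> simp

lemma Ifun_eq_IL (f g : PtComb) : Ifun f g = ILmap f g := by
  rw [Ifun, ILmap, Finsupp.lsum_apply, Finsupp.sum, LinearMap.sum_apply]
  refine Finset.sum_congr rfl fun p _ => ?_
  rw [LinearMap.toSpanSingleton_apply, LinearMap.smul_apply, smul_eq_mul, Irow_apply,
    Finset.mul_sum]
  refine Finset.sum_congr rfl fun q _ => ?_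
  split_ifs <;> ring

lemma IL_single_single (p q : ℝ × ℝ) :
    ILmap (Finsupp.single p 1) (Finsupp.single q 1)
      = if p.1 < q.1 ∧ p.2 < q.2 then (1:ℚ) else 0 := by
  rw [ILmap, Finsupp.lsum_single, LinearMap.toSpanSingleton_apply, one_smul, Irow,
    Finsupp.lsum_single]
  split_ifs <;> simp

lemma IL_sum_sum {α β : Type*} (s : Finset α) (t : Finset β) (u : α → ℝ × ℝ) (v : β → ℝ × ℝ) :
    ILmap (∑ i ∈ s, Finsupp.single (u i) 1) (∑ j ∈ t, Finsupp.single (v j) 1)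
      = ∑ i ∈ s, ∑ j ∈ t, if (u i).1 < (v j).1 ∧ (u i).2 < (v j).2 then (1:ℚ) else 0 := by
  rw [map_sum ILmap, LinearMap.sum_apply]
  refine Finset.sum_congr rfl fun i _ => ?_
  rw [map_sum]
  exact Finset.sum_congr rfl fun j _ => IL_single_single _ _

end AuxBilinear

section AuxCast

lemma lt_add_half (a b : ℕ) : ((a:ℝ) < (b:ℝ) + 1/2) ↔ a ≤ b := by
  constructor
  · intro h
    by_contra hc
    push_neg at hc
    have : (b:ℝ) + 1 ≤ a := by exact_mod_cast hc
    linarith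
  · intro h
    have : (a:ℝ) ≤ b := by exact_mod_cast h
    linarith

lemma add_half_lt (a b : ℕ) : ((a:ℝ) + 1/2 < (b:ℝ)) ↔ a < b := by
  constructor
  · intro h
    by_contra hc
    push_neg at hc
    have : (b:ℝ) ≤ a := by exact_mod_cast hc
    linarith
  · intro h
    have : (a:ℝ) + 1 ≤ b := by exact_mod_cast h
    linarith

lemma add_half_lt_add_half (a b : ℕ) : ((a:ℝ) + 1/2 < (b:ℝ) + 1/2) ↔ a < b := by
  rw [add_lt_add_iff_right, Nat.cast_lt]

end AuxCast

section AuxCount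

set_option maxHeartbeats 2000000 in
set_option maxHeartbeats 2000000 in
lemma ptURnat (n I J A B : ℕ) (hn : 2 ≤ n) (hI : I < n) (hJ : J < n) (hA : A < n) (hB : B < n)
    (hinj : I = J ↔ A = B) :
    (if (I+1)%n < (J+1)%n ∧ (A+1)%n < (B+1)%n then 1 else 0)
      + (if I < J ∧ A < B then 1 else 0)
      + (if I = J ∧ ¬ J = n-1 ∧ ¬ B = n-1 then 1 else 0)
      + (if A = n-1 ∧ J = n-1 then 1 else 0)
      + (if I = n-1 ∧ B = n-1 then 1 else 0)
    = (if (I+1)%n ≤ J ∧ (A+1)%n ≤ B then 1 else 0)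
      + (if I < (J+1)%n ∧ A < (B+1)%n then 1 else 0)
      + (if I = n-1 ∧ J = n-1 ∧ A = n-1 then 1 else 0) := by
  have hmod : ∀ m : ℕ, m < n → (m+1) % n = 0 ∧ m = n-1 ∨ (m+1) % n = m+1 ∧ m+1 < n := by
    intro m hm
    rcases eq_or_lt_of_le (Nat.succ_le_of_lt hm) with h | h
    · refine Or.inl ⟨?_, by omega⟩
      rw [Nat.succ_eq_add_one] at h
      rw [h, Nat.mod_self]
    · exact Or.inr ⟨Nat.mod_eq_of_lt h, h⟩
  rcases hmod I hI with ⟨hI1, hI2⟩ | ⟨hI1, hI2⟩ <;>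
  rcases hmod J hJ with ⟨hJ1, hJ2⟩ | ⟨hJ1, hJ2⟩ <;>
  rcases hmod A hA with ⟨hA1, hA2⟩ | ⟨hA1, hA2⟩ <;>
  rcases hmod B hB with ⟨hB1, hB2⟩ | ⟨hB1, hB2⟩ <;>
  rw [hI1, hJ1, hA1, hB1] <;>
  simp only [Nat.add_lt_add_iff_right, Nat.add_one_le_iff, Nat.lt_add_one_iff, Nat.not_lt_zero,
    Nat.zero_le, Nat.lt_irrefl, Nat.le_refl, and_true, true_and, and_false, false_and,
    if_true, if_false, not_true, not_false_iff] <;>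
  split_ifs <;> omega

lemma ptUR (hn : 2 ≤ n) (i j ai aj : Fin n) (hinj : i = j ↔ ai = aj) :
    (if ((i:ℕ)+1)%n < ((j:ℕ)+1)%n ∧ ((ai:ℕ)+1)%n < ((aj:ℕ)+1)%n then (1:ℚ) else 0)
      + (if (i:ℕ) < (j:ℕ) ∧ (ai:ℕ) < (aj:ℕ) then (1:ℚ) else 0)
      + (if (i:ℕ) = (j:ℕ) ∧ ¬ (j:ℕ) = n-1 ∧ ¬ (aj:ℕ) = n-1 then (1:ℚ) else 0)
      + (if (ai:ℕ) = n-1 ∧ (j:ℕ) = n-1 then (1:ℚ) else 0)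
      + (if (i:ℕ) = n-1 ∧ (aj:ℕ) = n-1 then (1:ℚ) else 0)
    = (if ((i:ℕ)+1)%n ≤ (j:ℕ) ∧ ((ai:ℕ)+1)%n ≤ (aj:ℕ) then (1:ℚ) else 0)
      + (if (i:ℕ) < ((j:ℕ)+1)%n ∧ (ai:ℕ) < ((aj:ℕ)+1)%n then (1:ℚ) else 0)
      + (if (i:ℕ) = n-1 ∧ (j:ℕ) = n-1 ∧ (ai:ℕ) = n-1 then (1:ℚ) else 0) := by
  have hinj' : (i:ℕ) = (j:ℕ) ↔ (ai:ℕ) = (aj:ℕ) := by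
    rw [Fin.val_inj, Fin.val_inj]; exact hinj
  have h := ptURnat n (i:ℕ) (j:ℕ) (ai:ℕ) (aj:ℕ) hn i.isLt j.isLt ai.isLt aj.isLt hinj'
  have h2 := congrArg (fun m : ℕ => (m:ℚ)) h
  push_cast [apply_ite (fun m : ℕ => (m:ℚ))] at h2
  convert h2 using 2 <;> norm_num

lemma sum_val_eq (m : ℕ) (hm : m < n) (c : ℚ) :
    ∑ j : Fin n, (if (j:ℕ) = m then c else 0) = c := by
  rw [Finset.sum_eq_single (⟨m, hm⟩ : Fin n)]
  · simp
  · intro b _ hb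
    rw [if_neg]
    intro hb'
    exact hb (Fin.ext hb')
  · simp

lemma sum_perm_val_eq (σ : Equiv.Perm (Fin n)) (m : ℕ) (hm : m < n) (c : ℚ) :
    ∑ j : Fin n, (if ((σ j : Fin n):ℕ) = m then c else 0) = c := by
  rw [← Equiv.sum_comp σ.symm (fun j => if ((σ j : Fin n):ℕ) = m then c else 0)]
  simp only [Equiv.apply_symm_apply]
  exact sum_val_eq m hm c


lemma sumD1 (hn : 2 ≤ n) (σ : Equiv.Perm (Fin n)) (hL : n-1 < n) :
    ∑ i : Fin n, ∑ j : Fin n,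
        (if (i:ℕ) = (j:ℕ) ∧ ¬ (j:ℕ) = n-1 ∧ ¬ ((σ j : Fin n):ℕ) = n-1 then (1:ℚ) else 0)
      = (n:ℚ) - 2 + (if ((σ (⟨n-1, hL⟩ : Fin n) : Fin n):ℕ) = n-1 then (1:ℚ) else 0) := by
  have inner : ∀ j : Fin n,
      (∑ i : Fin n, if (i:ℕ) = (j:ℕ) ∧ ¬ (j:ℕ) = n-1 ∧ ¬ ((σ j : Fin n):ℕ) = n-1
        then (1:ℚ) else 0)
      = if ¬ (j:ℕ) = n-1 ∧ ¬ ((σ j : Fin n):ℕ) = n-1 then (1:ℚ) else 0 := by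
    intro j
    by_cases hC : ¬ (j:ℕ) = n-1 ∧ ¬ ((σ j : Fin n):ℕ) = n-1
    · rw [if_pos hC,
        Finset.sum_congr rfl (fun i _ => if_congr (and_iff_left hC) rfl rfl)]
      exact sum_val_eq (j:ℕ) j.isLt 1
    · rw [if_neg hC]
      exact Finset.sum_eq_zero fun i _ => if_neg fun h => hC h.2
  rw [Finset.sum_comm, Finset.sum_congr rfl fun j _ => inner j]
  have pointw : ∀ j : Fin n,
      (if ¬ (j:ℕ) = n-1 ∧ ¬ ((σ j : Fin n):ℕ) = n-1 then (1:ℚ) else 0)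
      = 1 - (if (j:ℕ) = n-1 then (1:ℚ) else 0) - (if ((σ j : Fin n):ℕ) = n-1 then (1:ℚ) else 0)
        + (if (j:ℕ) = n-1 ∧ ((σ j : Fin n):ℕ) = n-1 then (1:ℚ) else 0) := by
    intro j
    by_cases h1 : (j:ℕ) = n-1 <;> by_cases h2 : ((σ j : Fin n):ℕ) = n-1 <;> simp [h1, h2]
  rw [Finset.sum_congr rfl fun j _ => pointw j]
  have hd : ∑ j : Fin n, (if (j:ℕ) = n-1 ∧ ((σ j : Fin n):ℕ) = n-1 then (1:ℚ) else 0)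
      = (if ((σ (⟨n-1, hL⟩ : Fin n) : Fin n):ℕ) = n-1 then (1:ℚ) else 0) := by
    by_cases he : ((σ (⟨n-1, hL⟩ : Fin n) : Fin n):ℕ) = n-1
    · rw [if_pos he]
      have hiff : ∀ j : Fin n, ((j:ℕ) = n-1 ∧ ((σ j : Fin n):ℕ) = n-1) ↔ (j:ℕ) = n-1 := by
        intro j
        constructor
        · exact And.left
        · intro h
          refine ⟨h, ?_⟩
          have hj : j = (⟨n-1, hL⟩ : Fin n) := Fin.ext h
          rw [hj]; exact he
      rw [Finset.sum_congr rfl fun j _ => if_congr (hiff j) rfl rfl]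
      exact sum_val_eq _ hL 1
    · rw [if_neg he]
      refine Finset.sum_eq_zero fun j _ => if_neg fun h => he ?_
      have hj : j = (⟨n-1, hL⟩ : Fin n) := Fin.ext h.1
      rw [← hj]; exact h.2
  simp only [Finset.sum_sub_distrib, Finset.sum_add_distrib, hd,
    sum_val_eq (n-1) hL (1:ℚ), sum_perm_val_eq σ (n-1) hL (1:ℚ), Finset.sum_const,
    Finset.card_univ, Fintype.card_fin, nsmul_eq_mul, mul_one]
  ring

lemma sumD2 (σ : Equiv.Perm (Fin n)) (hL : n-1 < n) :
    ∑ i : Fin n, ∑ j : Fin n,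
        (if ((σ i : Fin n):ℕ) = n-1 ∧ (j:ℕ) = n-1 then (1:ℚ) else 0) = 1 := by
  have inner : ∀ i : Fin n,
      (∑ j : Fin n, if ((σ i : Fin n):ℕ) = n-1 ∧ (j:ℕ) = n-1 then (1:ℚ) else 0)
      = if ((σ i : Fin n):ℕ) = n-1 then (1:ℚ) else 0 := by
    intro i
    by_cases hP : ((σ i : Fin n):ℕ) = n-1
    · rw [if_pos hP,
        Finset.sum_congr rfl (fun j _ => if_congr (and_iff_right hP) rfl rfl)]
      exact sum_val_eq _ hL 1
    · rw [if_neg hP]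
      exact Finset.sum_eq_zero fun j _ => if_neg fun h => hP h.1
  rw [Finset.sum_congr rfl fun i _ => inner i]
  exact sum_perm_val_eq σ _ hL 1

lemma sumD3 (σ : Equiv.Perm (Fin n)) (hL : n-1 < n) :
    ∑ i : Fin n, ∑ j : Fin n,
        (if (i:ℕ) = n-1 ∧ ((σ j : Fin n):ℕ) = n-1 then (1:ℚ) else 0) = 1 := by
  have inner : ∀ i : Fin n,
      (∑ j : Fin n, if (i:ℕ) = n-1 ∧ ((σ j : Fin n):ℕ) = n-1 then (1:ℚ) else 0)
      = if (i:ℕ) = n-1 then (1:ℚ) else 0 := by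
    intro i
    by_cases hP : (i:ℕ) = n-1
    · rw [if_pos hP,
        Finset.sum_congr rfl (fun j _ => if_congr (and_iff_right hP) rfl rfl)]
      exact sum_perm_val_eq σ _ hL 1
    · rw [if_neg hP]
      exact Finset.sum_eq_zero fun j _ => if_neg fun h => hP h.1
  rw [Finset.sum_congr rfl fun i _ => inner i]
  exact sum_val_eq _ hL 1

lemma sumD4 (σ : Equiv.Perm (Fin n)) (hL : n-1 < n) :
    ∑ i : Fin n, ∑ j : Fin n,
        (if (i:ℕ) = n-1 ∧ (j:ℕ) = n-1 ∧ ((σ i : Fin n):ℕ) = n-1 then (1:ℚ) else 0)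
      = (if ((σ (⟨n-1, hL⟩ : Fin n) : Fin n):ℕ) = n-1 then (1:ℚ) else 0) := by
  have inner : ∀ i : Fin n,
      (∑ j : Fin n, if (i:ℕ) = n-1 ∧ (j:ℕ) = n-1 ∧ ((σ i : Fin n):ℕ) = n-1 then (1:ℚ) else 0)
      = if (i:ℕ) = n-1 ∧ ((σ i : Fin n):ℕ) = n-1 then (1:ℚ) else 0 := by
    intro i
    by_cases hP : (i:ℕ) = n-1 ∧ ((σ i : Fin n):ℕ) = n-1
    · rw [if_pos hP]
      have hiff : ∀ j : Fin n,
          ((i:ℕ) = n-1 ∧ (j:ℕ) = n-1 ∧ ((σ i : Fin n):ℕ) = n-1) ↔ (j:ℕ) = n-1 := by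
        intro j
        exact ⟨fun h => h.2.1, fun h => ⟨hP.1, h, hP.2⟩⟩
      rw [Finset.sum_congr rfl fun j _ => if_congr (hiff j) rfl rfl]
      exact sum_val_eq _ hL 1
    · rw [if_neg hP]
      exact Finset.sum_eq_zero fun j _ => if_neg fun h => hP ⟨h.1, h.2.2⟩
  rw [Finset.sum_congr rfl fun i _ => inner i]
  by_cases he : ((σ (⟨n-1, hL⟩ : Fin n) : Fin n):ℕ) = n-1
  · rw [if_pos he]
    have hiff : ∀ i : Fin n, ((i:ℕ) = n-1 ∧ ((σ i : Fin n):ℕ) = n-1) ↔ (i:ℕ) = n-1 := by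
      intro i
      constructor
      · exact And.left
      · intro h
        refine ⟨h, ?_⟩
        have hi : i = (⟨n-1, hL⟩ : Fin n) := Fin.ext h
        rw [hi]; exact he
    rw [Finset.sum_congr rfl fun i _ => if_congr (hiff i) rfl rfl]
    exact sum_val_eq _ hL 1
  · rw [if_neg he]
    refine Finset.sum_eq_zero fun i _ => if_neg fun h => he ?_
    have hi : i = (⟨n-1, hL⟩ : Fin n) := Fin.ext h.1
    rw [← hi]; exact h.2

end AuxCount

namespace Grid

variable {n : ℕ}

lemma expand (G : Grid n) (x : Equiv.Perm (Fin n)) :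
    Ifun (pts x - G.XX) (pts x - G.XX)
      = (∑ i : Fin n, ∑ j : Fin n,
          if (i:ℕ) < (j:ℕ) ∧ ((x i : Fin n):ℕ) < ((x j : Fin n):ℕ) then (1:ℚ) else 0)
      - (∑ i : Fin n, ∑ j : Fin n,
          if (i:ℕ) ≤ (j:ℕ) ∧ ((x i : Fin n):ℕ) ≤ ((G.σX j : Fin n):ℕ) then (1:ℚ) else 0)
      - (∑ i : Fin n, ∑ j : Fin n,
          if (i:ℕ) < (j:ℕ) ∧ ((G.σX i : Fin n):ℕ) < ((x j : Fin n):ℕ) then (1:ℚ) else 0)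
      + (∑ i : Fin n, ∑ j : Fin n,
          if (i:ℕ) < (j:ℕ) ∧ ((G.σX i : Fin n):ℕ) < ((G.σX j : Fin n):ℕ) then (1:ℚ) else 0) := by
  rw [Ifun_eq_IL]
  simp only [map_sub, LinearMap.sub_apply]
  rw [pts, XX]
  rw [IL_sum_sum, IL_sum_sum, IL_sum_sum, IL_sum_sum]
  simp only [Xpt, Nat.cast_lt, lt_add_half, add_half_lt, add_half_lt_add_half]
  ring

lemma fiber_sum {M : Type*} [AddCommMonoid M] (G : Grid n) (f : Fin n → M) :
    ∑ c : G.Comp, ∑ i ∈ univ.filter (fun i => Quotient.mk G.compSetoid i = c), f i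
      = ∑ i : Fin n, f i := by
  calc ∑ c : G.Comp, ∑ i ∈ univ.filter (fun i => Quotient.mk G.compSetoid i = c), f i
      = ∑ c : G.Comp, ∑ i : Fin n, if Quotient.mk G.compSetoid i = c then f i else 0 := by
        exact Finset.sum_congr rfl fun c _ => Finset.sum_filter _ _
    _ = ∑ i : Fin n, ∑ c : G.Comp, if Quotient.mk G.compSetoid i = c then f i else 0 :=
        Finset.sum_comm
    _ = ∑ i : Fin n, f i := by
        refine Finset.sum_congr rfl fun i _ => ?_
        have h1 : (∑ c : G.Comp, if Quotient.mk G.compSetoid i = c then f i else 0)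
            = if Quotient.mk G.compSetoid i = Quotient.mk G.compSetoid i then f i else 0 :=
          by
            rw [Finset.sum_eq_single (ι := G.Comp) (Quotient.mk G.compSetoid i)]
            · simp
            · intro b _ hb; exact if_neg fun h => hb h.symm
            · intro h; exact absurd (Finset.mem_univ _) h
        simpa using h1

lemma sum_XXc (G : Grid n) : ∑ c : G.Comp, G.XXc c = G.XX := by
  simp only [XXc, XX]
  exact G.fiber_sum _

lemma sum_OOc (G : Grid n) : ∑ c : G.Comp, G.OOc c = G.OO := by
  simp only [OOc, OO]
  exact G.fiber_sum _

lemma sum_nComp (G : Grid n) : ∑ c : G.Comp, (G.nComp c : ℚ) = n := by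
  have : ∑ c : G.Comp, (G.nComp c : ℚ)
      = ∑ c : G.Comp, ∑ i ∈ univ.filter (fun i => Quotient.mk G.compSetoid i = c), (1:ℚ) := by
    refine Finset.sum_congr rfl fun c _ => ?_
    rw [nComp, Finset.card_eq_sum_ones]
    push_cast
    rfl
  rw [this, G.fiber_sum fun _ => (1:ℚ)]
  simp

lemma sum_one_comp (G : Grid n) : ∑ _c : G.Comp, (1:ℚ) = G.numComp := by
  simp [numComp, Nat.card_eq_fintype_card]

lemma master (G : Grid n) (x : Equiv.Perm (Fin n))
    (h : Ifun (pts x - G.XX) (pts x - G.XX) = -(n:ℚ)) :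
    G.M x = 2 * (∑ c : G.Comp, G.Acomp c x) + 1 - (G.numComp : ℚ) := by
  have hsum : ∑ c : G.Comp, (G.XXc c - G.OOc c) = G.XX - G.OO := by
    rw [Finset.sum_sub_distrib, sum_XXc, sum_OOc]
  have hJ : ∑ c : G.Comp, Jfun (pts x - (2:ℚ)⁻¹ • (G.XX + G.OO)) (G.XXc c - G.OOc c)
      = Jfun (pts x - (2:ℚ)⁻¹ • (G.XX + G.OO)) (G.XX - G.OO) := by
    rw [← hsum]
    simp only [Jfun, Ifun_eq_IL, map_sum, LinearMap.sum_apply, Finset.sum_div,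
      add_div, Finset.sum_add_distrib]
  have hconst : ∑ c : G.Comp, ((G.nComp c : ℚ) - 1)/2 = ((n:ℚ) - G.numComp)/2 := by
    rw [← Finset.sum_div, Finset.sum_sub_distrib, sum_nComp, sum_one_comp]
  have h' := h
  rw [Ifun_eq_IL] at h'
  simp only [M, Acomp]
  rw [Finset.sum_sub_distrib, hJ, hconst]
  simp only [Jfun, Ifun_eq_IL, map_sub, map_add, map_smul, LinearMap.sub_apply,
    LinearMap.add_apply, LinearMap.smul_apply, smul_eq_mul] at h' ⊢
  linarith

lemma coreLL (G : Grid n) :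
    Ifun (pts G.xLL - G.XX) (pts G.xLL - G.XX) = -(n:ℚ) := by
  rw [G.expand G.xLL]
  rw [show G.xLL = G.σX from rfl]
  have key : ∀ i j : Fin n,
      (if (i:ℕ) < (j:ℕ) ∧ ((G.σX i : Fin n):ℕ) < ((G.σX j : Fin n):ℕ) then (1:ℚ) else 0)
        - (if (i:ℕ) ≤ (j:ℕ) ∧ ((G.σX i : Fin n):ℕ) ≤ ((G.σX j : Fin n):ℕ) then (1:ℚ) else 0)
      = -(if i = j then (1:ℚ) else 0) := by
    intro i j
    by_cases h : i = j
    · subst h; simp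
    · have h1 : (i:ℕ) ≠ (j:ℕ) := fun hc => h (Fin.ext hc)
      have h2 : ((G.σX i : Fin n):ℕ) ≠ ((G.σX j : Fin n):ℕ) :=
        fun hc => h (G.σX.injective (Fin.ext hc))
      rw [if_neg h, neg_zero]
      split_ifs with hc1 hc2 hc3
      · norm_num
      · exact absurd ⟨Nat.le_of_lt hc1.1, Nat.le_of_lt hc1.2⟩ hc2
      · exact absurd ⟨Nat.lt_of_le_of_ne hc3.1 h1, Nat.lt_of_le_of_ne hc3.2 h2⟩ hc1
      · norm_num
  have hm : (∑ i : Fin n, ∑ j : Fin n,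
        if (i:ℕ) < (j:ℕ) ∧ ((G.σX i : Fin n):ℕ) < ((G.σX j : Fin n):ℕ) then (1:ℚ) else 0)
      - (∑ i : Fin n, ∑ j : Fin n,
        if (i:ℕ) ≤ (j:ℕ) ∧ ((G.σX i : Fin n):ℕ) ≤ ((G.σX j : Fin n):ℕ) then (1:ℚ) else 0)
      = -(n:ℚ) := by
    rw [← Finset.sum_sub_distrib]
    calc ∑ i : Fin n,
          ((∑ j : Fin n,
            if (i:ℕ) < (j:ℕ) ∧ ((G.σX i : Fin n):ℕ) < ((G.σX j : Fin n):ℕ) then (1:ℚ) else 0)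
          - (∑ j : Fin n,
            if (i:ℕ) ≤ (j:ℕ) ∧ ((G.σX i : Fin n):ℕ) ≤ ((G.σX j : Fin n):ℕ) then (1:ℚ) else 0))
        = ∑ i : Fin n, ∑ j : Fin n, -(if i = j then (1:ℚ) else 0) := by
          refine Finset.sum_congr rfl fun i _ => ?_
          rw [← Finset.sum_sub_distrib]
          exact Finset.sum_congr rfl fun j _ => key i j
      _ = -(n:ℚ) := by
          simp [Finset.sum_ite_eq, Finset.card_univ]
  linarith [hm]

lemma coreUR [NeZero n] (hn : 2 ≤ n) (G : Grid n) :
    Ifun (pts G.xUR - G.XX) (pts G.xUR - G.XX) = -(n:ℚ) := by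
  rw [G.expand G.xUR]
  have h1n : 1 < n := hn
  have hUR : ∀ i : Fin n, G.xUR (i+1) = G.σX i + 1 := by
    intro i
    show G.σX (i + 1 - 1) + 1 = G.σX i + 1
    rw [add_sub_cancel_right]
  have hs : ∀ t : Fin n, ((t + 1 : Fin n) : ℕ) = ((t:ℕ) + 1) % n := by
    intro t
    rw [Fin.add_def, Fin.val_one', Nat.mod_eq_of_lt h1n]
  have reL : ∀ F : Fin n → Fin n → ℚ,
      (∑ i : Fin n, ∑ j : Fin n, F i j) = ∑ i : Fin n, ∑ j : Fin n, F (i+1) j := by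
    intro F
    rw [← Equiv.sum_comp (Equiv.addRight (1:Fin n)) (fun i => ∑ j : Fin n, F i j)]
    simp only [Equiv.coe_addRight]
  have reR : ∀ F : Fin n → Fin n → ℚ,
      (∑ i : Fin n, ∑ j : Fin n, F i j) = ∑ i : Fin n, ∑ j : Fin n, F i (j+1) := by
    intro F
    refine Finset.sum_congr rfl fun i _ => ?_
    rw [← Equiv.sum_comp (Equiv.addRight (1:Fin n)) (fun j => F i j)]
    simp only [Equiv.coe_addRight]
  have e1 : (∑ i : Fin n, ∑ j : Fin n,
        if (i:ℕ) < (j:ℕ) ∧ ((G.xUR i : Fin n):ℕ) < ((G.xUR j : Fin n):ℕ) then (1:ℚ) else 0)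
      = ∑ i : Fin n, ∑ j : Fin n,
        if ((i:ℕ)+1)%n < ((j:ℕ)+1)%n ∧
            (((G.σX i : Fin n):ℕ)+1)%n < (((G.σX j : Fin n):ℕ)+1)%n then (1:ℚ) else 0 := by
    rw [reL]
    rw [reR]
    simp only [hUR, hs]
  have e2 : (∑ i : Fin n, ∑ j : Fin n,
        if (i:ℕ) ≤ (j:ℕ) ∧ ((G.xUR i : Fin n):ℕ) ≤ ((G.σX j : Fin n):ℕ) then (1:ℚ) else 0)
      = ∑ i : Fin n, ∑ j : Fin n,
        if ((i:ℕ)+1)%n ≤ (j:ℕ) ∧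
            (((G.σX i : Fin n):ℕ)+1)%n ≤ ((G.σX j : Fin n):ℕ) then (1:ℚ) else 0 := by
    rw [reL]
    simp only [hUR, hs]
  have e3 : (∑ i : Fin n, ∑ j : Fin n,
        if (i:ℕ) < (j:ℕ) ∧ ((G.σX i : Fin n):ℕ) < ((G.xUR j : Fin n):ℕ) then (1:ℚ) else 0)
      = ∑ i : Fin n, ∑ j : Fin n,
        if (i:ℕ) < ((j:ℕ)+1)%n ∧
            ((G.σX i : Fin n):ℕ) < (((G.σX j : Fin n):ℕ)+1)%n then (1:ℚ) else 0 := by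
    rw [reR]
    simp only [hUR, hs]
  rw [e1, e2, e3]
  have hL : n - 1 < n := by omega
  have hpt : ∀ i j : Fin n,
      (if ((i:ℕ)+1)%n < ((j:ℕ)+1)%n ∧
          (((G.σX i : Fin n):ℕ)+1)%n < (((G.σX j : Fin n):ℕ)+1)%n then (1:ℚ) else 0)
      + (if (i:ℕ) < (j:ℕ) ∧ ((G.σX i : Fin n):ℕ) < ((G.σX j : Fin n):ℕ) then (1:ℚ) else 0)
      + (if (i:ℕ) = (j:ℕ) ∧ ¬ (j:ℕ) = n-1 ∧ ¬ ((G.σX j : Fin n):ℕ) = n-1 then (1:ℚ) else 0)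
      + (if ((G.σX i : Fin n):ℕ) = n-1 ∧ (j:ℕ) = n-1 then (1:ℚ) else 0)
      + (if (i:ℕ) = n-1 ∧ ((G.σX j : Fin n):ℕ) = n-1 then (1:ℚ) else 0)
      = (if ((i:ℕ)+1)%n ≤ (j:ℕ) ∧
            (((G.σX i : Fin n):ℕ)+1)%n ≤ ((G.σX j : Fin n):ℕ) then (1:ℚ) else 0)
      + (if (i:ℕ) < ((j:ℕ)+1)%n ∧
            ((G.σX i : Fin n):ℕ) < (((G.σX j : Fin n):ℕ)+1)%n then (1:ℚ) else 0)
      + (if (i:ℕ) = n-1 ∧ (j:ℕ) = n-1 ∧ ((G.σX i : Fin n):ℕ) = n-1 then (1:ℚ) else 0) :=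
    fun i j => ptUR hn i j (G.σX i) (G.σX j)
      ⟨fun h => by rw [h], fun h => G.σX.injective h⟩
  have hbig := Finset.sum_congr rfl fun (i : Fin n) (_ : i ∈ univ) =>
    Finset.sum_congr rfl fun (j : Fin n) (_ : j ∈ univ) => hpt i j
  simp only [Finset.sum_add_distrib] at hbig
  have h1 := sumD1 hn G.σX hL
  have h2 := sumD2 G.σX hL
  have h3 := sumD3 G.σX hL
  have h4 := sumD4 G.σX hL
  linarith [hbig, h1, h2, h3, h4]


end Grid

/-- For a toroidal grid diagram `G` of size `n` representing a link
with `ℓ` components, the canonical generators satisfy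
`M(x^UR) = 2·Σ_c A_c(x^UR) + 1 − ℓ` and `M(x^LL) = 2·Σ_c A_c(x^LL) + 1 − ℓ`,
the sums running over the components `c` (orbits of `τ = σO⁻¹ ∘ σX`). -/
theorem maslov_eq_sum_alexander {n : ℕ} [NeZero n] (hn : 2 ≤ n) (G : Grid n) :
    G.M G.xUR = 2 * (∑ c : G.Comp, G.Acomp c G.xUR) + 1 - (G.numComp : ℚ) ∧
    G.M G.xLL = 2 * (∑ c : G.Comp, G.Acomp c G.xLL) + 1 - (G.numComp : ℚ) := by
  exact ⟨G.master G.xUR (G.coreUR hn), G.master G.xLL G.coreLL⟩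
end
end

section
/- Let G be a toroidal grid diagram of size n representing a knot, and fix an index i₀ ∈ {0,…,n−1}. Then for all generators x, y ∈ S(G) and every family of nonnegative integers (a_i) indexed by i ∈ {0,…,n−1} with i ≠ i₀, there is exactly one domain φ from x to y with X_i(φ) = 0 for all i ∈ {0,…,n−1} and O_i(φ) = a_i for all i ≠ i₀. -/
open Finset

noncomputable section

open scoped Classical

/-- For a 2-chain `φ` (a `ℤ`-valued function on the unit squares of the grid torus,
`φ i j` being the value on the square with lower-left corner `(i, j)`) and a lattice
point `p = (i, j)`, the quantity
`a(φ, p) = φ(NE square) + φ(SW square) − φ(NW square) − φ(SE square)`. -/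
def aCoef {n : ℕ} [NeZero n] (φ : Fin n → Fin n → ℤ) (i j : Fin n) : ℤ :=
  φ i j + φ (i - 1) (j - 1) - φ (i - 1) j - φ i (j - 1)

/-- `φ` is a domain from the generator `x` to the generator `y`: at every lattice point
`p` of the torus, `a(φ, p)` is `1` if `p ∈ x \ y`, `−1` if `p ∈ y \ x`, and `0`
otherwise. -/
def IsGridDomain {n : ℕ} [NeZero n] (x y : Equiv.Perm (Fin n)) (φ : Fin n → Fin n → ℤ) :
    Prop :=
  ∀ i j : Fin n,
    aCoef φ i j =
      if x i = j ∧ ¬ y i = j then 1 else if y i = j ∧ ¬ x i = j then -1 else 0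


namespace Stmt15

variable {n : ℕ} [NeZero n]

def Cmat (x y : Equiv.Perm (Fin n)) (i j : Fin n) : ℤ :=
  (if x i = j then 1 else 0) - (if y i = j then 1 else 0)

def Cnat (x y : Equiv.Perm (Fin n)) (i j : ℕ) : ℤ :=
  if h : i < n ∧ j < n then Cmat x y ⟨i, h.1⟩ ⟨j, h.2⟩ else 0

def Tsum (x y : Equiv.Perm (Fin n)) (a b : ℕ) : ℤ :=
  ∑ i ∈ Finset.range (a+1), ∑ j ∈ Finset.range (b+1), Cnat x y i j

lemma rowsum (x y : Equiv.Perm (Fin n)) (i : ℕ) :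
    ∑ j ∈ Finset.range n, Cnat x y i j = 0 := by
  by_cases hi : i < n
  · rw [← Fin.sum_univ_eq_sum_range (fun j => Cnat x y i j) n]
    have h1 : ∀ j : Fin n, Cnat x y i j.val = Cmat x y ⟨i,hi⟩ j := fun j => by
      simp [Cnat, j.isLt, hi]
    simp_rw [h1, Cmat]
    rw [Finset.sum_sub_distrib]
    simp
  · exact Finset.sum_eq_zero fun j hj => by simp [Cnat, hi]

lemma colsum (x y : Equiv.Perm (Fin n)) (j : ℕ) :
    ∑ i ∈ Finset.range n, Cnat x y i j = 0 := by
  by_cases hj : j < n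
  · rw [← Fin.sum_univ_eq_sum_range (fun i => Cnat x y i j) n]
    have h1 : ∀ i : Fin n, Cnat x y i.val j = Cmat x y i ⟨j,hj⟩ := fun i => by
      simp [Cnat, i.isLt, hj]
    simp_rw [h1, Cmat]
    rw [Finset.sum_sub_distrib]
    have h2 : ∀ (z : Equiv.Perm (Fin n)),
        (∑ i : Fin n, if z i = (⟨j,hj⟩:Fin n) then (1:ℤ) else 0) = 1 := by
      intro z
      have h3 : ∀ i : Fin n, (if z i = (⟨j,hj⟩:Fin n) then (1:ℤ) else 0)
          = if i = z.symm ⟨j,hj⟩ then 1 else 0 := by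
        intro i
        by_cases h : z i = (⟨j,hj⟩:Fin n)
        · rw [if_pos h, if_pos (by rw [← h]; simp)]
        · rw [if_neg h, if_neg (by intro hc; rw [hc] at h; simp at h)]
      simp_rw [h3]
      simp
    rw [h2, h2]; ring
  · exact Finset.sum_eq_zero fun i hi => by simp [Cnat, hj]

lemma Tsum_right (x y : Equiv.Perm (Fin n)) (a : ℕ) : Tsum x y a (n-1) = 0 := by
  have hn : (n-1)+1 = n := Nat.succ_pred_eq_of_pos (Nat.pos_of_ne_zero (NeZero.ne n))
  unfold Tsum
  rw [hn]
  exact Finset.sum_eq_zero fun i _ => rowsum x y i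

lemma Tsum_left (x y : Equiv.Perm (Fin n)) (b : ℕ) : Tsum x y (n-1) b = 0 := by
  have hn : (n-1)+1 = n := Nat.succ_pred_eq_of_pos (Nat.pos_of_ne_zero (NeZero.ne n))
  unfold Tsum
  rw [hn, Finset.sum_comm]
  exact Finset.sum_eq_zero fun j _ => colsum x y j

lemma Tsum_succ_left (x y : Equiv.Perm (Fin n)) (a b : ℕ) :
    Tsum x y (a+1) b = Tsum x y a b + ∑ j ∈ Finset.range (b+1), Cnat x y (a+1) j := by
  unfold Tsum; rw [Finset.sum_range_succ]

lemma Tsum_succ_right (x y : Equiv.Perm (Fin n)) (a b : ℕ) :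
    Tsum x y a (b+1) = Tsum x y a b + ∑ i ∈ Finset.range (a+1), Cnat x y i (b+1) := by
  unfold Tsum
  rw [← Finset.sum_add_distrib]
  exact Finset.sum_congr rfl fun i _ => Finset.sum_range_succ _ _

def phi0 (x y : Equiv.Perm (Fin n)) (i j : Fin n) : ℤ := Tsum x y i.val j.val

lemma myValSub (hn : 2 ≤ n) (a : Fin n) :
    ((a - 1 : Fin n) : ℕ) = if a.val = 0 then n - 1 else a.val - 1 := by
  rw [Fin.sub_def]
  have h1 : (1 : Fin n).val = 1 := by rw [Fin.val_one']; exact Nat.mod_eq_of_lt (by omega)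
  rw [h1]
  simp only [Fin.val_mk]
  by_cases h : a.val = 0
  · rw [if_pos h, h]; exact Nat.mod_eq_of_lt (by omega)
  · rw [if_neg h]
    have ha := a.isLt
    rw [Nat.mod_eq_sub_mod (by omega)]
    have h2 : n - 1 + a.val - n = a.val - 1 := by omega
    rw [h2]; exact Nat.mod_eq_of_lt (by omega)

lemma aCoef_phi0 (hn : 2 ≤ n) (x y : Equiv.Perm (Fin n)) (i j : Fin n) :
    aCoef (phi0 x y) i j = Cmat x y i j := by
  have hCn : Cnat x y i.val j.val = Cmat x y i j := by simp [Cnat, i.isLt, j.isLt]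
  unfold aCoef phi0
  rw [myValSub hn i, myValSub hn j]
  by_cases hi : i.val = 0 <;> by_cases hj : j.val = 0
  · rw [if_pos hi, if_pos hj, hi, hj, Tsum_left, Tsum_right, Tsum_left]
    have h0 : Tsum x y 0 0 = Cnat x y 0 0 := by unfold Tsum; simp
    rw [hi, hj] at hCn
    rw [h0]; linarith
  · obtain ⟨b', hb⟩ := Nat.exists_eq_succ_of_ne_zero hj
    rw [Nat.succ_eq_add_one] at hb
    rw [if_pos hi, if_neg hj, hi, hb, Tsum_left, Tsum_left]
    simp only [Nat.add_sub_cancel]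
    rw [Tsum_succ_right, Finset.sum_range_one]
    rw [hi, hb] at hCn
    linarith
  · obtain ⟨a', ha⟩ := Nat.exists_eq_succ_of_ne_zero hi
    rw [Nat.succ_eq_add_one] at ha
    rw [if_neg hi, if_pos hj, hj, ha, Tsum_right, Tsum_right]
    simp only [Nat.add_sub_cancel]
    rw [Tsum_succ_left, Finset.sum_range_one]
    rw [hj, ha] at hCn
    linarith
  · obtain ⟨a', ha⟩ := Nat.exists_eq_succ_of_ne_zero hi
    obtain ⟨b', hb⟩ := Nat.exists_eq_succ_of_ne_zero hj
    rw [Nat.succ_eq_add_one] at ha hb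
    rw [if_neg hi, if_neg hj, ha, hb]
    simp only [Nat.add_sub_cancel]
    rw [Tsum_succ_left x y a' (b'+1), Tsum_succ_left x y a' b',
        Finset.sum_range_succ _ (b'+1)]
    rw [ha, hb] at hCn
    linarith

lemma kernel_decomp (hn : 2 ≤ n) (ψ : Fin n → Fin n → ℤ)
    (h : ∀ i j : Fin n, aCoef ψ i j = 0) (i j : Fin n) :
    ψ i j = ψ i 0 + ψ 0 j - ψ 0 0 := by
  suffices H : ∀ a : ℕ, ∀ b : ℕ, ∀ (ha : a < n) (hb : b < n),
      ψ ⟨a,ha⟩ ⟨b,hb⟩ = ψ ⟨a,ha⟩ 0 + ψ 0 ⟨b,hb⟩ - ψ 0 0 by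
    have := H i.val j.val i.isLt j.isLt
    simpa using this
  intro a
  induction a with
  | zero =>
    intro b ha hb
    have h0 : (⟨0,ha⟩ : Fin n) = 0 := rfl
    rw [h0]; ring
  | succ a iha =>
    intro b
    induction b with
    | zero =>
      intro ha hb
      have h0 : (⟨0,hb⟩ : Fin n) = 0 := rfl
      rw [h0]; ring
    | succ b ihb =>
      intro ha hb
      have ha' : a < n := by omega
      have hb' : b < n := by omega
      have key := h ⟨a+1,ha⟩ ⟨b+1,hb⟩
      have e1 : (⟨a+1,ha⟩ : Fin n) - 1 = (⟨a,ha'⟩ : Fin n) := by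
        ext; rw [myValSub hn]; simp
      have e2 : (⟨b+1,hb⟩ : Fin n) - 1 = (⟨b,hb'⟩ : Fin n) := by
        ext; rw [myValSub hn]; simp
      rw [aCoef, e1, e2] at key
      have k1 := iha (b+1) ha' hb
      have k2 := ihb ha hb'
      have k3 := iha b ha' hb'
      linarith

/-- The permutation `σO⁻¹ σX` of a grid diagram. -/
abbrev pigd (G : Grid n) : Equiv.Perm (Fin n) := G.σO⁻¹ * G.σX

noncomputable def Kf (G : Grid n) (hK : G.RepKnot) (i₀ c : Fin n) : ℕ :=
  Nat.find (hK i₀ c)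

lemma Kf_spec (G : Grid n) (hK : G.RepKnot) (i₀ c : Fin n) :
    ((pigd G) ^ (Kf G hK i₀ c)) i₀ = c := Nat.find_spec (hK i₀ c)

lemma Kf_ne (G : Grid n) (hK : G.RepKnot) (i₀ c : Fin n) (hc : c ≠ i₀) :
    Kf G hK i₀ c ≠ 0 := by
  intro h0
  have h := Kf_spec G hK i₀ c
  rw [h0, pow_zero] at h
  simp at h
  exact hc h.symm

lemma Kf_pre (G : Grid n) (hK : G.RepKnot) (i₀ c : Fin n) (hc : c ≠ i₀) :
    Kf G hK i₀ ((pigd G)⁻¹ c) = Kf G hK i₀ c - 1 := by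
  have hne := Kf_ne G hK i₀ c hc
  have hk1 : ((pigd G) ^ (Kf G hK i₀ c - 1)) i₀ = (pigd G)⁻¹ c := by
    have h := Kf_spec G hK i₀ c
    have he : Kf G hK i₀ c = (Kf G hK i₀ c - 1) + 1 := by omega
    rw [he, pow_succ', Equiv.Perm.mul_apply] at h
    have h2 := congrArg (⇑(pigd G)⁻¹) h
    simpa using h2
  have le1 : Kf G hK i₀ ((pigd G)⁻¹ c) ≤ Kf G hK i₀ c - 1 := Nat.find_min' _ hk1
  have le2 : Kf G hK i₀ c ≤ Kf G hK i₀ ((pigd G)⁻¹ c) + 1 := by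
    apply Nat.find_min'
    rw [pow_succ', Equiv.Perm.mul_apply, Kf_spec G hK i₀ ((pigd G)⁻¹ c)]
    simp
  omega

lemma Gg_step (G : Grid n) (hK : G.RepKnot) (i₀ : Fin n) (d : Fin n → ℤ)
    (c : Fin n) (hc : c ≠ i₀) :
    -(∑ m ∈ Finset.Icc 1 (Kf G hK i₀ ((pigd G)⁻¹ c)), d (((pigd G) ^ m) i₀))
      + (∑ m ∈ Finset.Icc 1 (Kf G hK i₀ c), d (((pigd G) ^ m) i₀)) = d c := by
  have hne := Kf_ne G hK i₀ c hc
  obtain ⟨k, hk⟩ : ∃ k, Kf G hK i₀ c = k + 1 := ⟨Kf G hK i₀ c - 1, by omega⟩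
  rw [Kf_pre G hK i₀ c hc, hk]
  simp only [Nat.add_sub_cancel]
  rw [Finset.sum_Icc_succ_top (by omega : 1 ≤ k+1)]
  have hs : ((pigd G) ^ (k+1)) i₀ = c := by rw [← hk]; exact Kf_spec G hK i₀ c
  rw [hs]; ring

lemma Hconst (G : Grid n) (hK : G.RepKnot) (i₀ : Fin n) (H : Fin n → ℤ)
    (hH : ∀ c, c ≠ i₀ → H ((pigd G)⁻¹ c) = H c) (c : Fin n) : H c = H i₀ := by
  suffices h : ∀ N c, Kf G hK i₀ c = N → H c = H i₀ by exact h _ c rfl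
  intro N
  induction N using Nat.strong_induction_on with
  | _ N ih =>
    intro c hc
    by_cases hci : c = i₀
    · rw [hci]
    · have h1 : Kf G hK i₀ ((pigd G)⁻¹ c) = N - 1 := by
        rw [Kf_pre G hK i₀ c hci, hc]
      have h2 : N ≠ 0 := hc ▸ Kf_ne G hK i₀ c hci
      rw [← hH c hci]
      exact ih (N-1) (by omega) _ h1

end Stmt15

/-- Let `G` be a toroidal grid diagram of size `n` representing a knot
and fix an index `i₀`.  Then for all generators `x`, `y` and every family of nonnegative
integers `(a_i)_{i ≠ i₀}`, there is exactly one domain `φ` from `x` to `y` with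
`X_i(φ) = 0` for all `i` and `O_i(φ) = a_i` for all `i ≠ i₀`. -/
theorem domain_existence_uniqueness {n : ℕ} [NeZero n] (hn : 2 ≤ n)
    (G : Grid n) (hK : G.RepKnot) (i₀ : Fin n)
    (x y : Equiv.Perm (Fin n)) (a : Fin n → ℕ) :
    ∃! φ : Fin n → Fin n → ℤ,
      IsGridDomain x y φ ∧
      (∀ i : Fin n, φ i (G.σX i) = 0) ∧
      (∀ i : Fin n, i ≠ i₀ → φ i (G.σO i) = (a i : ℤ)) := by
  classical
  have hπinv : ∀ c : Fin n, (Stmt15.pigd G)⁻¹ c = G.σX⁻¹ (G.σO c) := by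
    intro c; simp [Stmt15.pigd, mul_inv_rev]
  set d : Fin n → ℤ := fun c =>
    (a c : ℤ) - Stmt15.phi0 x y c (G.σO c) + Stmt15.phi0 x y c (G.σX c) with hd
  set Gg : Fin n → ℤ := fun c =>
    -(∑ m ∈ Finset.Icc 1 (Stmt15.Kf G hK i₀ c), d (((Stmt15.pigd G) ^ m) i₀)) with hGg
  set φt : Fin n → Fin n → ℤ := fun i j =>
    Stmt15.phi0 x y i j + (-(Stmt15.phi0 x y i (G.σX i)) - Gg i) + Gg (G.σX⁻¹ j) with hφt
  have hmain : IsGridDomain x y φt ∧ (∀ i : Fin n, φt i (G.σX i) = 0) ∧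
      (∀ i : Fin n, i ≠ i₀ → φt i (G.σO i) = (a i : ℤ)) := by
    refine ⟨?_, ?_, ?_⟩
    · intro i j
      have h1 : aCoef φt i j = aCoef (Stmt15.phi0 x y) i j := by
        rw [hφt]; simp only [aCoef]; ring
      rw [h1, Stmt15.aCoef_phi0 hn x y i j]
      unfold Stmt15.Cmat
      by_cases hx : x i = j <;> by_cases hy : y i = j <;> simp [hx, hy]
    · intro i
      rw [hφt]
      simp only [Equiv.Perm.inv_def, Equiv.symm_apply_apply]
      ring
    · intro i hi
      rw [hφt]
      simp only
      have h2 : G.σX⁻¹ (G.σO i) = (Stmt15.pigd G)⁻¹ i := by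
        simp [Stmt15.pigd, mul_inv_rev]
      rw [h2]
      have h3 := Stmt15.Gg_step G hK i₀ d i hi
      have h4 : Gg ((Stmt15.pigd G)⁻¹ i) - Gg i
          = -(∑ m ∈ Finset.Icc 1 (Stmt15.Kf G hK i₀ ((Stmt15.pigd G)⁻¹ i)),
              d (((Stmt15.pigd G) ^ m) i₀))
            + (∑ m ∈ Finset.Icc 1 (Stmt15.Kf G hK i₀ i), d (((Stmt15.pigd G) ^ m) i₀)) := by
        rw [hGg]; ring
      have h5 : Gg ((Stmt15.pigd G)⁻¹ i) - Gg i = d i := by rw [h4]; exact h3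
      have h6 : d i = (a i : ℤ) - Stmt15.phi0 x y i (G.σO i)
          + Stmt15.phi0 x y i (G.σX i) := by rw [hd]
      linarith
  refine ⟨φt, hmain, ?_⟩
  intro φ' hφ'
  obtain ⟨hdom', hX', hO'⟩ := hφ'
  obtain ⟨hdom, hX, hO⟩ := hmain
  set ψ : Fin n → Fin n → ℤ := fun i j => φ' i j - φt i j with hψ
  have hker : ∀ i j : Fin n, aCoef ψ i j = 0 := by
    intro i j
    have h1 : aCoef ψ i j = aCoef φ' i j - aCoef φt i j := by
      rw [hψ]; simp only [aCoef]; ring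
    rw [h1, hdom' i j, hdom i j]; ring
  have hdec := Stmt15.kernel_decomp hn ψ hker
  have hXz : ∀ i : Fin n, ψ i (G.σX i) = 0 := by
    intro i; rw [hψ]; simp only; rw [hX' i, hX i]; ring
  have hOz : ∀ i : Fin n, i ≠ i₀ → ψ i (G.σO i) = 0 := by
    intro i hi; rw [hψ]; simp only; rw [hO' i hi, hO i hi]; ring
  set H : Fin n → ℤ := fun c => ψ 0 (G.σX c) with hH
  have hf1 : ∀ i : Fin n, ψ i 0 - ψ 0 0 = -H i := by
    intro i
    have := hdec i (G.σX i)
    rw [hXz i] at this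
    rw [hH]
    linarith
  have hHrel : ∀ c : Fin n, c ≠ i₀ → H ((Stmt15.pigd G)⁻¹ c) = H c := by
    intro c hc
    have h1 := hdec c (G.σO c)
    rw [hOz c hc] at h1
    have h2 := hf1 c
    have h3 : H ((Stmt15.pigd G)⁻¹ c) = ψ 0 (G.σO c) := by
      rw [hH]; simp only
      rw [hπinv c]
      simp
    rw [h3]; linarith
  have hHc := Stmt15.Hconst G hK i₀ H hHrel
  have hzero : ∀ i j : Fin n, ψ i j = 0 := by
    intro i j
    have h1 := hdec i j
    have h2 := hf1 i
    have h3 : ψ 0 j = H (G.σX⁻¹ j) := by rw [hH]; simp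
    have h4 := hHc i
    have h5 := hHc (G.σX⁻¹ j)
    rw [h3] at h1
    linarith
  funext i j
  have := hzero i j
  rw [hψ] at this
  simp only at this
  linarith
end
end
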